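/- arXiv:1912.00137 — 8 statements merged into one kernel-verified Lean document; each statement's English description precedes it below -/
import Mathlib

section
/- For every proper convex lower semicontinuous function f on a real Hilbert space X, every τ > 0, and every x ∈ X, the Moreau identity holds: prox_{τ f}(x) = x − τ · prox_{f*/τ}(x/τ), where f* is the Fenchel conjugate of f. -/
/-!
Minimality of `p` and convexity of `f` make `v = τ⁻¹ • (x - p)` a subgradient of `f` at `p`,
so the Fenchel–Young inequality is an equality there: `f* v = ⟪v, p⟫ - f p`. Bounding `f*`
below by its affine minorant `u ↦ ⟪u, p⟫ - f p`, the dual objective dominates a quadratic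
whose unique minimiser is `v` and which agrees with it at `v`; hence the dual minimiser `q`
is `v`, i.e. `p = x - τ • q`.
-/

open RealInnerProductSpace Filter Set Topology

section

variable {X : Type*} [NormedAddCommGroup X] [InnerProductSpace ℝ X]

noncomputable def fenchelConjugate (f : X → ℝ) (v : X) : EReal :=
  ⨆ w : X, (((⟪v, w⟫ : ℝ) - f w : ℝ) : EReal)

theorem inner_sub_le_fenchelConjugate (f : X → ℝ) (v w : X) :
    (((⟪v, w⟫ : ℝ) - f w : ℝ) : EReal) ≤ fenchelConjugate f v :=
  le_iSup (fun w => (((⟪v, w⟫ : ℝ) - f w : ℝ) : EReal)) w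

theorem fenchelConjugate_eq_of_inner_sub_le {f : X → ℝ} {v p : X}
    (h : ∀ w, ⟪v, w - p⟫ ≤ f w - f p) :
    fenchelConjugate f v = ((⟪v, p⟫ - f p : ℝ) : EReal) := by
  refine le_antisymm (iSup_le fun w => ?_) (inner_sub_le_fenchelConjugate f v p)
  rw [EReal.coe_le_coe_iff]
  linarith [h w, inner_sub_right (𝕜 := ℝ) v w p]

/-- `x - p` is a subgradient of `f` at `p`: compare `p` with `p + t • (w - p)`, `t → 0⁺`. -/
theorem ConvexOn.inner_sub_le_of_forall_le_add_half_norm_sq {f : X → ℝ}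
    (hf : ConvexOn ℝ univ f) {x p : X}
    (hp : ∀ y, f p + 1 / 2 * ‖x - p‖ ^ 2 ≤ f y + 1 / 2 * ‖x - y‖ ^ 2) (w : X) :
    ⟪x - p, w - p⟫ ≤ f w - f p := by
  have along_segment : ∀ t ∈ Ioo (0 : ℝ) 1,
      ⟪x - p, w - p⟫ ≤ f w - f p + t / 2 * ‖w - p‖ ^ 2 := by
    rintro t ⟨ht0, ht1⟩
    have hseg : (1 - t) • p + t • w = p + t • (w - p) := by
      rw [smul_sub, sub_smul, one_smul]; abel
    have hconv :=
      hf.2 (mem_univ p) (mem_univ w) (by linarith : (0 : ℝ) ≤ 1 - t) ht0.le (by ring)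
    rw [hseg, smul_eq_mul, smul_eq_mul] at hconv
    have hmin := hp (p + t • (w - p))
    rw [show x - (p + t • (w - p)) = (x - p) - t • (w - p) by abel,
      norm_sub_sq_real (x - p), real_inner_smul_right, norm_smul, Real.norm_of_nonneg ht0.le] at hmin
    have key : t * ⟪x - p, w - p⟫ ≤ t * (f w - f p + t / 2 * ‖w - p‖ ^ 2) := by
      linarith
    exact le_of_mul_le_mul_left key ht0
  have hlim : Tendsto (fun t : ℝ => f w - f p + t / 2 * ‖w - p‖ ^ 2) (𝓝[>] 0)
      (𝓝 (f w - f p)) := by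
    have : Continuous (fun t : ℝ => f w - f p + t / 2 * ‖w - p‖ ^ 2) := by fun_prop
    simpa using (this.tendsto 0).mono_left nhdsWithin_le_nhds
  exact ge_of_tendsto hlim (eventually_of_mem (Ioo_mem_nhdsGT one_pos) along_segment)

/-- `u ↦ ⟪u, a⟫ + ½‖b - u‖²` is `½‖(b - a) - u‖²` plus a constant. -/
theorem eq_sub_of_inner_add_half_norm_sq_le {a b u : X}
    (h : ⟪u, a⟫ + 1 / 2 * ‖b - u‖ ^ 2 ≤ ⟪b - a, a⟫ + 1 / 2 * ‖b - (b - a)‖ ^ 2) :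
    u = b - a := by
  have hsq : ‖b - a - u‖ ^ 2 ≤ 0 := by
    rw [sub_sub_cancel, inner_sub_left, real_inner_self_eq_norm_sq] at h
    rw [show b - a - u = (b - u) - a by abel, norm_sub_sq_real, inner_sub_left]
    linarith [real_inner_comm u a]
  rw [eq_comm, ← sub_eq_zero, ← norm_eq_zero]
  exact pow_eq_zero_iff two_ne_zero |>.1 (le_antisymm hsq (sq_nonneg _))

end

theorem moreau_identity_general {X : Type*} [NormedAddCommGroup X] [InnerProductSpace ℝ X]
    (f : X → ℝ)
    (hconv : ConvexOn ℝ Set.univ f)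
    (τ : ℝ) (hτ : 0 < τ) (x p q : X)
    (hp : ∀ y : X, τ * f p + (1 / 2) * ‖x - p‖ ^ 2 ≤ τ * f y + (1 / 2) * ‖x - y‖ ^ 2)
    (hq : ∀ v : X,
      ((τ⁻¹ : ℝ) : EReal) * (⨆ w : X, (((⟪q, w⟫ : ℝ) - f w : ℝ) : EReal))
          + (((1 / 2) * ‖τ⁻¹ • x - q‖ ^ 2 : ℝ) : EReal)
        ≤ ((τ⁻¹ : ℝ) : EReal) * (⨆ w : X, (((⟪v, w⟫ : ℝ) - f w : ℝ) : EReal))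
          + (((1 / 2) * ‖τ⁻¹ • x - v‖ ^ 2 : ℝ) : EReal)) :
    p = x - τ • q := by
  set v := τ⁻¹ • (x - p)
  have hsub : ∀ w, ⟪v, w - p⟫ ≤ f w - f p := fun w => by
    have := (hconv.smul hτ.le).inner_sub_le_of_forall_le_add_half_norm_sq hp w
    rw [real_inner_smul_left, inv_mul_le_iff₀ hτ]
    simpa only [Pi.smul_apply, smul_eq_mul, mul_sub] using this
  have hdual : τ⁻¹ * (⟪q, p⟫ - f p) + 1 / 2 * ‖τ⁻¹ • x - q‖ ^ 2
      ≤ τ⁻¹ * (⟪v, p⟫ - f p) + 1 / 2 * ‖τ⁻¹ • x - v‖ ^ 2 := by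
    have h := hq v
    change _ * fenchelConjugate f q + _ ≤ _ * fenchelConjugate f v + _ at h
    rw [fenchelConjugate_eq_of_inner_sub_le hsub] at h
    have hτinv : (0 : EReal) ≤ ((τ⁻¹ : ℝ) : EReal) := mod_cast (inv_pos.2 hτ).le
    exact_mod_cast (add_le_add_left
      (mul_le_mul_of_nonneg_left (inner_sub_le_fenchelConjugate f q p) hτinv) _).trans h
  have hv : v = τ⁻¹ • x - τ⁻¹ • p := smul_sub _ _ _
  have hqv : q = τ⁻¹ • x - τ⁻¹ • p := by
    refine eq_sub_of_inner_add_half_norm_sq_le ?_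
    rw [real_inner_smul_right, real_inner_smul_right, ← hv]
    linarith [real_inner_comm p q, real_inner_comm p v]
  rw [hqv, smul_sub, smul_inv_smul₀ hτ.ne', smul_inv_smul₀ hτ.ne', sub_sub_cancel]

/-- **Moreau identity.** For every convex lower semicontinuous `f : X → ℝ` on a real Hilbert
space, every `τ > 0` and every `x`: if `p = prox_{τ f}(x)` (i.e. `p` minimizes
`y ↦ τ f y + ½‖x - y‖²`) and `q = prox_{f*/τ}(x/τ)` (i.e. `q` minimizes
`v ↦ (1/τ) f*(v) + ½‖x/τ - v‖²`, where `f*(v) = ⨆ w, ⟨v, w⟩ - f w` is the Fenchel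
conjugate, with values in `EReal`), then `p = x - τ • q`. -/
theorem moreau_identity {X : Type*} [NormedAddCommGroup X] [InnerProductSpace ℝ X]
    [CompleteSpace X] (f : X → ℝ)
    (hconv : ConvexOn ℝ Set.univ f) (hlsc : LowerSemicontinuous f)
    (τ : ℝ) (hτ : 0 < τ) (x p q : X)
    (hp : ∀ y : X, τ * f p + (1 / 2) * ‖x - p‖ ^ 2 ≤ τ * f y + (1 / 2) * ‖x - y‖ ^ 2)
    (hq : ∀ v : X,
      ((τ⁻¹ : ℝ) : EReal) * (⨆ w : X, (((⟪q, w⟫ : ℝ) - f w : ℝ) : EReal))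
          + (((1 / 2) * ‖τ⁻¹ • x - q‖ ^ 2 : ℝ) : EReal)
        ≤ ((τ⁻¹ : ℝ) : EReal) * (⨆ w : X, (((⟪v, w⟫ : ℝ) - f w : ℝ) : EReal))
          + (((1 / 2) * ‖τ⁻¹ • x - v‖ ^ 2 : ℝ) : EReal)) :
    p = x - τ • q :=
  moreau_identity_general f hconv τ hτ x p q hp hq
end

section
/- Let M be maximally monotone on Z and C : Z → Z be ξ-cocoercive. For γ ∈ (0, 2ξ), set δ = 2 − γ/(2ξ). For any z⁽⁰⁾ and any sequence (ρ⁽ⁱ⁾) in [0, δ] with Σᵢ ρ⁽ⁱ⁾(δ − ρ⁽ⁱ⁾) = +∞, the relaxed forward–backward iteration z⁽ⁱ⁺½⁾ = J_{γM}(z⁽ⁱ⁾ − γC z⁽ⁱ⁾), z⁽ⁱ⁺¹⁾ = z⁽ⁱ⁾ + ρ⁽ⁱ⁾(z⁽ⁱ⁺½⁾ − z⁽ⁱ⁾) converges weakly to a zero of M + C, provided such a zero exists. -/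
/-!
Put `δ = 2 - γ / (2ξ)` and `T = J ∘ (id - γ C)`. Firm nonexpansiveness of the resolvent and
cocoercivity of `C` give `‖T a - T b‖² + (δ - 1) ‖(a - T a) - (b - T b)‖² ≤ ‖a - b‖²`, i.e.
`id - T` is `δ/2`-cocoercive, so the over-relaxation `R = id - δ (id - T)` is nonexpansive; its
fixed points are those of `T`, which are the zeros of `M + C`. The iteration is the
Krasnosel'skiĭ–Mann iteration of `R` with steps `ρ i / δ ∈ [0, 1]`: it is Fejér monotone with
respect to the fixed points, its residual `‖R z i - z i‖` decreases, and since
`Σ ρ i (δ - ρ i) = ∞` the residual tends to `0`. By demiclosedness every weak cluster point is a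
fixed point, and Opial's argument shows that there is only one.
-/

open RealInnerProductSpace Filter

def SetValuedMonotone {Z : Type*} [NormedAddCommGroup Z] [InnerProductSpace ℝ Z]
    (M : Z → Set Z) : Prop :=
  ∀ ⦃x x' u u' : Z⦄, u ∈ M x → u' ∈ M x' → (0 : ℝ) ≤ ⟪x - x', u - u'⟫

def SetValuedMaximallyMonotone {Z : Type*} [NormedAddCommGroup Z] [InnerProductSpace ℝ Z]
    (M : Z → Set Z) : Prop :=
  SetValuedMonotone M ∧
    ∀ N : Z → Set Z, SetValuedMonotone N → (∀ x, M x ⊆ N x) → ∀ x, N x ⊆ M x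

open Topology Function

theorem tendsto_zero_of_antitone_of_summable_mul {a r : ℕ → ℝ} (ha : ∀ i, 0 ≤ a i)
    (hr : Antitone r) (hr0 : ∀ i, 0 ≤ r i) (hsum : Summable fun i => a i * r i)
    (hdiv : ¬Summable a) : Tendsto r atTop (𝓝 0) := by
  have hbdd : BddBelow (Set.range r) := ⟨0, by rintro _ ⟨i, rfl⟩; exact hr0 i⟩
  have hlim := tendsto_atTop_ciInf hr hbdd
  suffices h : ⨅ i, r i = 0 by rwa [h] at hlim
  by_contra hne
  have hpos : 0 < ⨅ i, r i := (le_ciInf hr0).lt_of_ne' hne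
  refine hdiv (Summable.of_nonneg_of_le ha (fun i => ?_) (hsum.div_const (⨅ i, r i)))
  rw [le_div_iff₀ hpos]
  exact mul_le_mul_of_nonneg_left (ciInf_le hbdd i) (ha i)

section

variable {Z : Type*} [NormedAddCommGroup Z] [InnerProductSpace ℝ Z]

def Cocoercive (ξ : ℝ) (C : Z → Z) : Prop :=
  ∀ z z', ξ * ‖C z - C z'‖ ^ 2 ≤ ⟪z - z', C z - C z'⟫

theorem Cocoercive.norm_sub_smul_sq_add_le {ξ γ : ℝ} {C : Z → Z} (hC : Cocoercive ξ C)
    (hγ : 0 ≤ γ) (a b : Z) :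
    ‖(a - γ • C a) - (b - γ • C b)‖ ^ 2 + γ * (2 * ξ - γ) * ‖C a - C b‖ ^ 2 ≤ ‖a - b‖ ^ 2 := by
  have h : (a - γ • C a) - (b - γ • C b) = (a - b) - γ • (C a - C b) := by module
  rw [h, norm_sub_sq_real, real_inner_smul_right, norm_smul, Real.norm_eq_abs, abs_of_nonneg hγ]
  nlinarith [hC a b]

theorem Cocoercive.lipschitzWith_id_sub_smul {ξ γ : ℝ} {C : Z → Z} (hC : Cocoercive ξ C)
    (hγ0 : 0 ≤ γ) (hγ : γ ≤ 2 * ξ) : LipschitzWith 1 fun a => a - γ • C a := by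
  refine LipschitzWith.of_dist_le_mul fun a b => ?_
  rw [NNReal.coe_one, one_mul, dist_eq_norm, dist_eq_norm]
  refine (sq_le_sq₀ (norm_nonneg _) (norm_nonneg _)).mp ?_
  nlinarith [hC.norm_sub_smul_sq_add_le hγ0 a b, mul_nonneg (mul_nonneg hγ0 (sub_nonneg.2 hγ))
    (sq_nonneg ‖C a - C b‖)]

theorem cocoercive_id_sub_of_norm_sq_add_le {T : Z → Z} {δ : ℝ}
    (hT : ∀ a b, ‖T a - T b‖ ^ 2 + (δ - 1) * ‖(a - T a) - (b - T b)‖ ^ 2 ≤ ‖a - b‖ ^ 2) :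
    Cocoercive (δ / 2) fun a => a - T a := by
  intro a b
  have h : T a - T b = (a - b) - ((a - T a) - (b - T b)) := by abel
  have := hT a b
  rw [h, norm_sub_sq_real] at this
  linarith

theorem norm_add_smul_sq_le {ξ γ : ℝ} (hγ0 : 0 < γ) (hγ2 : γ < 2 * ξ) (q e : Z) :
    (1 - γ / (2 * ξ)) * ‖q + γ • e‖ ^ 2 ≤ ‖q‖ ^ 2 + γ * (2 * ξ - γ) * ‖e‖ ^ 2 := by
  have hξ : 0 < 2 * ξ := by linarith
  have hsq : 0 ≤ ‖q - (2 * ξ - γ) • e‖ ^ 2 := sq_nonneg _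
  rw [norm_sub_sq_real, real_inner_smul_right, norm_smul, Real.norm_eq_abs,
    abs_of_pos (by linarith : 0 < 2 * ξ - γ)] at hsq
  rw [norm_add_sq_real, real_inner_smul_right, norm_smul, Real.norm_eq_abs, abs_of_pos hγ0,
    one_sub_div hξ.ne', div_mul_eq_mul_div, div_le_iff₀ hξ]
  nlinarith [mul_nonneg hγ0.le hsq]

section

variable {M : Z → Set Z} {γ : ℝ} {J : Z → Z}

theorem SetValuedMonotone.cocoercive_resolvent (hM : SetValuedMonotone M) (hγ : 0 < γ)
    (hJ : ∀ z, γ⁻¹ • (z - J z) ∈ M (J z)) : Cocoercive 1 J := by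
  intro u v
  have h := hM (hJ u) (hJ v)
  rw [← smul_sub, real_inner_smul_right, sub_sub_sub_comm, inner_sub_right,
    real_inner_self_eq_norm_sq, real_inner_comm] at h
  nlinarith [inv_pos.mpr hγ]

theorem SetValuedMonotone.resolvent_eq_iff (hM : SetValuedMonotone M) (hγ : 0 < γ)
    (hJ : ∀ z, γ⁻¹ • (z - J z) ∈ M (J z)) (u p : Z) : J u = p ↔ γ⁻¹ • (u - p) ∈ M p := by
  refine ⟨fun h => h ▸ hJ u, fun hp => ?_⟩
  have h := hM (hJ u) hp
  have hsub : γ⁻¹ • (u - J u) - γ⁻¹ • (u - p) = -(γ⁻¹ • (J u - p)) := by module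
  rw [hsub, inner_neg_right, real_inner_smul_right, real_inner_self_eq_norm_sq] at h
  have : ‖J u - p‖ ^ 2 ≤ 0 := by nlinarith [inv_pos.mpr hγ]
  exact sub_eq_zero.mp (norm_eq_zero.mp (by nlinarith [norm_nonneg (J u - p)]))

theorem SetValuedMonotone.norm_forwardBackward_sub_sq_add_le (hM : SetValuedMonotone M)
    {C : Z → Z} {ξ : ℝ} (hC : Cocoercive ξ C) (hγ0 : 0 < γ) (hγ2 : γ < 2 * ξ)
    (hJ : ∀ z, γ⁻¹ • (z - J z) ∈ M (J z)) (a b : Z) :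
    ‖J (a - γ • C a) - J (b - γ • C b)‖ ^ 2 + (2 - γ / (2 * ξ) - 1) *
      ‖(a - J (a - γ • C a)) - (b - J (b - γ • C b))‖ ^ 2 ≤ ‖a - b‖ ^ 2 := by
  set u := a - γ • C a
  set v := b - γ • C b
  have hbwd := (hM.cocoercive_resolvent hγ0 hJ).norm_sub_smul_sq_add_le zero_le_one u v
  have hfwd := hC.norm_sub_smul_sq_add_le hγ0.le a b
  have hyoung := norm_add_smul_sq_le hγ0 hγ2 ((u - J u) - (v - J v)) (C a - C b)
  have hsplit : (a - J u) - (b - J v) = ((u - J u) - (v - J v)) + γ • (C a - C b) := by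
    simp only [u, v]; module
  simp only [one_smul] at hbwd
  rw [hsplit, show (2 : ℝ) - γ / (2 * ξ) - 1 = 1 - γ / (2 * ξ) by ring]
  linarith

end

def WeakTendsto (x : ℕ → Z) (p : Z) : Prop :=
  ∀ w, Tendsto (fun i => ⟪x i, w⟫) atTop (𝓝 ⟪p, w⟫)

-- Sequential Banach–Alaoglu in the closed span of the sequence, which is separable; then Riesz.
theorem exists_strictMono_weakTendsto_of_bounded [CompleteSpace Z] {x : ℕ → Z} {B : ℝ}
    (hB : ∀ i, ‖x i‖ ≤ B) : ∃ φ : ℕ → ℕ, ∃ p, StrictMono φ ∧ WeakTendsto (x ∘ φ) p := by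
  set V := (Submodule.span ℝ (Set.range x)).topologicalClosure
  have hxV (i : ℕ) : x i ∈ V := Submodule.le_topologicalClosure _ (Submodule.subset_span ⟨i, rfl⟩)
  have : CompleteSpace V := (Submodule.isClosed_topologicalClosure _).completeSpace_coe
  have : TopologicalSpace.SeparableSpace V := by
    refine TopologicalSpace.IsSeparable.separableSpace ?_
    rw [Submodule.topologicalClosure_coe]
    exact (Set.countable_range x).isSeparable.span.closure
  let f (i : ℕ) : WeakDual ℝ V :=
    StrongDual.toWeakDual (InnerProductSpace.toDual ℝ V ⟨x i, hxV i⟩)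
  have hf (i : ℕ) : f i ∈ WeakDual.toStrongDual ⁻¹' Metric.closedBall 0 B :=
    (dist_zero_right (InnerProductSpace.toDual ℝ V ⟨x i, hxV i⟩)).trans_le (by simpa using hB i)
  obtain ⟨ℓ, -, φ, hφ, hℓ⟩ := WeakDual.isSeqCompact_closedBall ℝ V 0 B hf
  refine ⟨φ, (InnerProductSpace.toDual ℝ V).symm (WeakDual.toStrongDual ℓ), hφ, fun w => ?_⟩
  have := ((WeakDual.eval_continuous (V.orthogonalProjectionOnto w)).tendsto ℓ).comp hℓ
  rw [← Submodule.inner_orthogonalProjectionOnto_eq_of_mem_left,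
    InnerProductSpace.toDual_symm_apply]
  simpa [f, comp_def] using this

theorem LipschitzWith.isFixedPt_of_weakTendsto {R : Z → Z} (hR : LipschitzWith 1 R)
    {x : ℕ → Z} {p : Z} {B : ℝ} (hB : ∀ i, ‖x i‖ ≤ B) (hx : WeakTendsto x p)
    (hres : Tendsto (fun i => ‖R (x i) - x i‖) atTop (𝓝 0)) : IsFixedPt R p := by
  set d := p - R p
  have hbound (i : ℕ) : ‖d‖ ^ 2 ≤
      ‖R (x i) - x i‖ ^ 2 + 2 * ‖R (x i) - x i‖ * (B + ‖p‖) - 2 * (⟪x i, d⟫ - ⟪p, d⟫) := by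
    have hexp : ‖x i - R p‖ ^ 2 = ‖x i - p‖ ^ 2 + 2 * ⟪x i - p, d⟫ + ‖d‖ ^ 2 := by
      rw [← sub_add_sub_cancel (x i) p (R p), norm_add_sq_real]
    have htri : ‖x i - R p‖ ≤ ‖R (x i) - x i‖ + ‖x i - p‖ := by
      calc ‖x i - R p‖ ≤ ‖x i - R (x i)‖ + ‖R (x i) - R p‖ :=
            norm_sub_le_norm_sub_add_norm_sub _ _ _
        _ ≤ ‖R (x i) - x i‖ + ‖x i - p‖ := by
          rw [norm_sub_rev]; gcongr; simpa [dist_eq_norm] using hR.dist_le_mul (x i) p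
    have hxp : ‖x i - p‖ ≤ B + ‖p‖ := (_root_.norm_sub_le _ _).trans (by linarith [hB i])
    rw [inner_sub_left] at hexp
    nlinarith [norm_nonneg (x i - R p), norm_nonneg (R (x i) - x i), norm_nonneg (x i - p),
      mul_le_mul_of_nonneg_left hxp (norm_nonneg (R (x i) - x i))]
  have hlim : Tendsto (fun i => ‖R (x i) - x i‖ ^ 2 + 2 * ‖R (x i) - x i‖ * (B + ‖p‖)
      - 2 * (⟪x i, d⟫ - ⟪p, d⟫)) atTop (𝓝 0) := by
    simpa using ((hres.pow 2).add ((hres.const_mul 2).mul_const (B + ‖p‖))).sub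
      (((hx d).sub_const ⟪p, d⟫).const_mul 2)
  have hd : ‖d‖ ^ 2 ≤ 0 := ge_of_tendsto' hlim hbound
  exact (sub_eq_zero.mp (norm_eq_zero.mp (by nlinarith [norm_nonneg d]))).symm

theorem eq_of_weakTendsto_of_tendsto_norm_sub {x : ℕ → Z} {p q : Z} {lp lq : ℝ}
    (hp : Tendsto (fun i => ‖x i - p‖) atTop (𝓝 lp))
    (hq : Tendsto (fun i => ‖x i - q‖) atTop (𝓝 lq)) {φ ψ : ℕ → ℕ}
    (hφ : Tendsto φ atTop atTop) (hψ : Tendsto ψ atTop atTop)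
    (hxp : WeakTendsto (x ∘ φ) p) (hxq : WeakTendsto (x ∘ ψ) q) : p = q := by
  set c := (lq ^ 2 - lp ^ 2 + (‖p‖ ^ 2 - ‖q‖ ^ 2)) / 2
  have hc : Tendsto (fun i => ⟪x i, p - q⟫) atTop (𝓝 c) := by
    refine ((((hq.pow 2).sub (hp.pow 2)).add_const (‖p‖ ^ 2 - ‖q‖ ^ 2)).div_const 2).congr
      fun i => ?_
    rw [inner_sub_right, norm_sub_sq_real, norm_sub_sq_real]
    ring
  have hpc : ⟪p, p - q⟫ = c := tendsto_nhds_unique (hxp (p - q)) (hc.comp hφ)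
  have hqc : ⟪q, p - q⟫ = c := tendsto_nhds_unique (hxq (p - q)) (hc.comp hψ)
  rw [← sub_eq_zero, ← inner_self_eq_zero (𝕜 := ℝ), inner_sub_left, hpc, hqc, sub_self]

theorem exists_weakTendsto_of_tendsto_norm_sub [CompleteSpace Z] {x : ℕ → Z} {F : Set Z}
    {B : ℝ} (hB : ∀ i, ‖x i‖ ≤ B)
    (hF : ∀ w ∈ F, ∃ l, Tendsto (fun i => ‖x i - w‖) atTop (𝓝 l))
    (hclust : ∀ φ p, Tendsto φ atTop atTop → WeakTendsto (x ∘ φ) p → p ∈ F) :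
    ∃ p ∈ F, WeakTendsto x p := by
  obtain ⟨φ, p, hφ, hxp⟩ := exists_strictMono_weakTendsto_of_bounded hB
  have hpF := hclust φ p hφ.tendsto_atTop hxp
  refine ⟨p, hpF, fun w => tendsto_of_subseq_tendsto fun ns hns => ?_⟩
  obtain ⟨ψ, q, hψ, hxq⟩ := exists_strictMono_weakTendsto_of_bounded fun i => hB (ns i)
  have hnsψ : Tendsto (ns ∘ ψ) atTop atTop := hns.comp hψ.tendsto_atTop
  have hqF := hclust (ns ∘ ψ) q hnsψ hxq
  obtain ⟨lp, hlp⟩ := hF p hpF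
  obtain ⟨lq, hlq⟩ := hF q hqF
  have hpq := eq_of_weakTendsto_of_tendsto_norm_sub hlp hlq hφ.tendsto_atTop hnsψ hxp hxq
  exact ⟨ψ, hpq ▸ hxq w⟩

namespace LipschitzWith

variable {R : Z → Z}

theorem norm_add_smul_sub_sub_sq_le (hR : LipschitzWith 1 R) {w : Z} (hw : IsFixedPt R w) (x : Z)
    {t : ℝ} (ht : 0 ≤ t) :
    ‖x + t • (R x - x) - w‖ ^ 2 ≤ ‖x - w‖ ^ 2 - t * (1 - t) * ‖R x - x‖ ^ 2 := by
  have hRx : ‖R x - w‖ ≤ ‖x - w‖ := by simpa [hw.eq, dist_eq_norm] using hR.dist_le_mul x w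
  have hsq : ‖(x - w) + (R x - x)‖ ^ 2 ≤ ‖x - w‖ ^ 2 := by
    rw [sub_add_sub_cancel']
    exact pow_le_pow_left₀ (norm_nonneg _) hRx 2
  rw [norm_add_sq_real] at hsq
  rw [show x + t • (R x - x) - w = (x - w) + t • (R x - x) by abel, norm_add_sq_real,
    real_inner_smul_right, norm_smul, Real.norm_eq_abs, abs_of_nonneg ht]
  nlinarith

theorem norm_sub_add_smul_sub_le (hR : LipschitzWith 1 R) (x : Z) {t : ℝ} (ht0 : 0 ≤ t)
    (ht1 : t ≤ 1) : ‖R (x + t • (R x - x)) - (x + t • (R x - x))‖ ≤ ‖R x - x‖ := by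
  set y := x + t • (R x - x)
  have hy : ‖R y - R x‖ ≤ ‖y - x‖ := by simpa [dist_eq_norm] using hR.dist_le_mul y x
  have hyx : y - x = t • (R x - x) := by simp only [y]; abel
  have hxy : R x - y = (1 - t) • (R x - x) := by simp only [y]; module
  calc ‖R y - y‖ ≤ ‖R y - R x‖ + ‖R x - y‖ := norm_sub_le_norm_sub_add_norm_sub _ _ _
    _ ≤ t * ‖R x - x‖ + (1 - t) * ‖R x - x‖ := by
      rw [hyx, norm_smul, Real.norm_eq_abs, abs_of_nonneg ht0] at hy
      rw [hxy, norm_smul, Real.norm_eq_abs, abs_of_nonneg (sub_nonneg.2 ht1)]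
      linarith
    _ = ‖R x - x‖ := by ring

variable (hR : LipschitzWith 1 R) {α : ℕ → ℝ} (hα : ∀ i, α i ∈ Set.Icc (0 : ℝ) 1) {z : ℕ → Z}
  (hz : ∀ i, z (i + 1) = z i + α i • (R (z i) - z i))
include hR hα hz

theorem antitone_norm_sub_of_isFixedPt {w : Z} (hw : IsFixedPt R w) :
    Antitone fun i => ‖z i - w‖ := by
  refine antitone_nat_of_succ_le fun i => (sq_le_sq₀ (norm_nonneg _) (norm_nonneg _)).mp ?_
  have h := hR.norm_add_smul_sub_sub_sq_le hw (z i) (hα i).1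
  rw [← hz] at h
  nlinarith [mul_nonneg (mul_nonneg (hα i).1 (sub_nonneg.2 (hα i).2)) (sq_nonneg ‖R (z i) - z i‖)]

theorem summable_mul_norm_sub_sq {w : Z} (hw : IsFixedPt R w) :
    Summable fun i => α i * (1 - α i) * ‖R (z i) - z i‖ ^ 2 := by
  refine summable_of_sum_range_le (c := ‖z 0 - w‖ ^ 2)
    (fun i => mul_nonneg (mul_nonneg (hα i).1 (sub_nonneg.2 (hα i).2)) (sq_nonneg _)) fun n => ?_
  suffices h : ∑ i ∈ Finset.range n, α i * (1 - α i) * ‖R (z i) - z i‖ ^ 2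
      ≤ ‖z 0 - w‖ ^ 2 - ‖z n - w‖ ^ 2 by nlinarith [sq_nonneg ‖z n - w‖]
  induction n with
  | zero => simp
  | succ n ih =>
    have h := hR.norm_add_smul_sub_sub_sq_le hw (z n) (hα n).1
    rw [← hz] at h
    rw [Finset.sum_range_succ]
    linarith

theorem tendsto_norm_sub_zero {w : Z} (hw : IsFixedPt R w)
    (hdiv : ¬Summable fun i => α i * (1 - α i)) :
    Tendsto (fun i => ‖R (z i) - z i‖) atTop (𝓝 0) := by
  have hanti : Antitone fun i => ‖R (z i) - z i‖ := antitone_nat_of_succ_le fun i => by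
    simpa only [hz] using hR.norm_sub_add_smul_sub_le (z i) (hα i).1 (hα i).2
  have hsq := tendsto_zero_of_antitone_of_summable_mul
    (fun i => mul_nonneg (hα i).1 (sub_nonneg.2 (hα i).2))
    (fun i j hij => pow_le_pow_left₀ (norm_nonneg _) (hanti hij) 2) (fun i => sq_nonneg _)
    (hR.summable_mul_norm_sub_sq hα hz hw) hdiv
  simpa [Real.sqrt_sq (norm_nonneg _)] using hsq.sqrt

theorem exists_isFixedPt_weakTendsto [CompleteSpace Z] (hfix : ∃ w, IsFixedPt R w)
    (hdiv : ¬Summable fun i => α i * (1 - α i)) : ∃ p, IsFixedPt R p ∧ WeakTendsto z p := by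
  obtain ⟨w, hw⟩ := hfix
  have hB (i : ℕ) : ‖z i‖ ≤ ‖z 0 - w‖ + ‖w‖ :=
    (norm_le_norm_sub_add (z i) w).trans
      (add_le_add_left (hR.antitone_norm_sub_of_isFixedPt hα hz hw (Nat.zero_le i)) _)
  have hres := hR.tendsto_norm_sub_zero hα hz hw hdiv
  obtain ⟨p, hp, hzp⟩ := exists_weakTendsto_of_tendsto_norm_sub hB (F := fixedPoints R)
    (fun v hv => ⟨_, tendsto_atTop_ciInf (hR.antitone_norm_sub_of_isFixedPt hα hz hv)
      ⟨0, by rintro _ ⟨i, rfl⟩; exact norm_nonneg _⟩⟩)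
    (fun φ p hφ hzφ => hR.isFixedPt_of_weakTendsto (fun i => hB (φ i)) hzφ (hres.comp hφ))
  exact ⟨p, hp, hzp⟩

end LipschitzWith

end

theorem forward_backward_convergence_general {Z : Type*} [NormedAddCommGroup Z]
    [InnerProductSpace ℝ Z] [CompleteSpace Z]
    (M : Z → Set Z) (hM : SetValuedMaximallyMonotone M)
    (C : Z → Z) (ξ : ℝ)
    (hC : ∀ z z' : Z, ξ * ‖C z - C z'‖ ^ 2 ≤ ⟪z - z', C z - C z'⟫)
    (hzero : ∃ z : Z, -C z ∈ M z)
    (γ : ℝ) (hγ0 : 0 < γ) (hγ2 : γ < 2 * ξ)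
    (J : Z → Z) (hJ : ∀ z : Z, γ⁻¹ • (z - J z) ∈ M (J z))
    (ρ : ℕ → ℝ) (hρ : ∀ i, ρ i ∈ Set.Icc (0 : ℝ) (2 - γ / (2 * ξ)))
    (hdiv : ¬ Summable (fun i => ρ i * ((2 - γ / (2 * ξ)) - ρ i)))
    (z : ℕ → Z) (hrec : ∀ i, z (i + 1) = z i + ρ i • (J (z i - γ • C (z i)) - z i)) :
    ∃ zstar : Z, -C zstar ∈ M zstar ∧
      ∀ w : Z, Tendsto (fun i => (⟪z i, w⟫ : ℝ)) atTop (nhds ⟪zstar, w⟫) := by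
  set δ := 2 - γ / (2 * ξ)
  have hδ : 0 < δ := by have := (div_lt_one (by linarith)).mpr hγ2; linarith
  set R : Z → Z := fun a => a - δ • (a - J (a - γ • C a))
  have hR : LipschitzWith 1 R :=
    (cocoercive_id_sub_of_norm_sq_add_le (hM.1.norm_forwardBackward_sub_sq_add_le hC hγ0 hγ2 hJ)
      ).lipschitzWith_id_sub_smul hδ.le (by linarith)
  have hfix (p : Z) : IsFixedPt R p ↔ -C p ∈ M p := by
    rw [IsFixedPt, sub_eq_self, smul_eq_zero_iff_right hδ.ne', sub_eq_zero, eq_comm,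
      hM.1.resolvent_eq_iff hγ0 hJ, sub_sub_cancel_left, smul_neg, inv_smul_smul₀ hγ0.ne']
  have hα (i : ℕ) : ρ i / δ ∈ Set.Icc (0 : ℝ) 1 :=
    ⟨div_nonneg (hρ i).1 hδ.le, (div_le_one hδ).mpr (hρ i).2⟩
  have hz (i : ℕ) : z (i + 1) = z i + (ρ i / δ) • (R (z i) - z i) := by
    rw [hrec i, show R (z i) - z i = δ • (J (z i - γ • C (z i)) - z i) by simp only [R]; module,
      smul_smul, div_mul_cancel₀ _ hδ.ne']
  have hdiv' : ¬Summable fun i => ρ i / δ * (1 - ρ i / δ) := fun h =>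
    hdiv <| (h.mul_left (δ ^ 2)).congr fun i => by field_simp
  obtain ⟨zs, hzs⟩ := hzero
  obtain ⟨p, hp, hzp⟩ := hR.exists_isFixedPt_weakTendsto hα hz ⟨zs, (hfix zs).2 hzs⟩ hdiv'
  exact ⟨p, (hfix p).1 hp, hzp⟩

/-- **Convergence of the relaxed forward–backward algorithm.** Let `M` be maximally
monotone on `Z` and `C : Z → Z` be `ξ`-cocoercive, with a zero of `M + C` existing.
For `γ ∈ (0, 2ξ)`, set `δ = 2 - γ/(2ξ)`. For any `z 0` and any sequence `(ρ i)` in `[0, δ]`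
with `Σ_i ρ i (δ - ρ i) = +∞`, the iteration
`z (i+1) = z i + ρ i • (J_{γM}(z i - γ C (z i)) - z i)` converges weakly to a zero of
`M + C` (i.e. a point `zstar` with `-C zstar ∈ M zstar`). -/
theorem forward_backward_convergence {Z : Type*} [NormedAddCommGroup Z]
    [InnerProductSpace ℝ Z] [CompleteSpace Z]
    (M : Z → Set Z) (hM : SetValuedMaximallyMonotone M)
    (C : Z → Z) (ξ : ℝ) (hξ : 0 < ξ)
    (hC : ∀ z z' : Z, ξ * ‖C z - C z'‖ ^ 2 ≤ ⟪z - z', C z - C z'⟫)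
    (hzero : ∃ z : Z, -C z ∈ M z)
    (γ : ℝ) (hγ0 : 0 < γ) (hγ2 : γ < 2 * ξ)
    (J : Z → Z) (hJ : ∀ z : Z, γ⁻¹ • (z - J z) ∈ M (J z))
    (ρ : ℕ → ℝ) (hρ : ∀ i, ρ i ∈ Set.Icc (0 : ℝ) (2 - γ / (2 * ξ)))
    (hdiv : ¬ Summable (fun i => ρ i * ((2 - γ / (2 * ξ)) - ρ i)))
    (z : ℕ → Z) (hrec : ∀ i, z (i + 1) = z i + ρ i • (J (z i - γ • C (z i)) - z i)) :
    ∃ zstar : Z, -C zstar ∈ M zstar ∧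
      ∀ w : Z, Tendsto (fun i => (⟪z i, w⟫ : ℝ)) atTop (nhds ⟪zstar, w⟫) :=
  forward_backward_convergence_general M hM C ξ hC hzero γ hγ0 hγ2 J hJ ρ hρ hdiv z hrec
end

section
/- Let P be a self-adjoint strongly positive bounded linear operator on a real Hilbert space Z and M a maximally monotone operator on Z. Then P⁻¹M is maximally monotone on the Hilbert space Z_P obtained by equipping Z with the inner product ⟨x, x'⟩_P = ⟨x, P x'⟩, and consequently its resolvent (P⁻¹M + Id)⁻¹ is firmly nonexpansive with respect to the norm ‖·‖_P. -/
open RealInnerProductSpace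

/-- A set-valued operator is monotone for the inner product `⟨x, x'⟩_P = ⟨x, P x'⟩`. -/
def SetValuedMonotoneP {Z : Type*} [NormedAddCommGroup Z] [InnerProductSpace ℝ Z]
    (P : Z →L[ℝ] Z) (M : Z → Set Z) : Prop :=
  ∀ ⦃x x' u u' : Z⦄, u ∈ M x → u' ∈ M x' → (0 : ℝ) ≤ ⟪x - x', P (u - u')⟫

/-!
Since `⟪x - x', P (u - u')⟫ = ⟪x - x', P u - P u'⟫`, monotonicity of `P⁻¹ M` in `Z_P` is just
monotonicity of `M`. A coercive `P` is invertible (Lax–Milgram), so the `P`-image of a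
`P`-monotone extension of `P⁻¹ M` is a monotone extension of `M`; maximality of `M` then
transfers to `P⁻¹ M`. Firm nonexpansiveness of the resolvent is `P`-monotonicity applied to
`z - J z ∈ P⁻¹ M (J z)`, using that `P` is self-adjoint.
-/

section

variable {Z : Type*} [NormedAddCommGroup Z] [InnerProductSpace ℝ Z]

theorem ContinuousLinearMap.surjective_of_coercive [CompleteSpace Z] (P : Z →L[ℝ] Z) {a : ℝ}
    (ha : 0 < a) (hP : ∀ x, a * ‖x‖ ^ 2 ≤ ⟪x, P x⟫) : Function.Surjective P := by
  refine (ContinuousLinearMap.isUnit_iff_bijective.mp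
    (P.isUnit_of_forall_le_norm_inner_map (c := ⟨a, ha.le⟩) ha fun x => ?_)).surjective
  calc ‖x‖ ^ 2 * a ≤ ⟪x, P x⟫ := by linarith [hP x]
    _ ≤ ‖⟪P x, x⟫‖ := by rw [real_inner_comm]; exact Real.le_norm_self _

theorem SetValuedMonotone.preimage {M : Z → Set Z} (hM : SetValuedMonotone M) (P : Z →L[ℝ] Z) :
    SetValuedMonotoneP P (fun x => P ⁻¹' M x) := by
  intro x x' u u' hu hu'
  simpa only [map_sub] using hM hu hu'

theorem SetValuedMonotoneP.image {P : Z →L[ℝ] Z} {N : Z → Set Z}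
    (hN : SetValuedMonotoneP P N) : SetValuedMonotone (fun x => P '' N x) := by
  rintro x x' _ _ ⟨u, hu, rfl⟩ ⟨u', hu', rfl⟩
  simpa only [map_sub] using hN hu hu'

theorem SetValuedMaximallyMonotone.preimage_maximal {M : Z → Set Z}
    (hM : SetValuedMaximallyMonotone M) {P : Z →L[ℝ] Z} (hP : Function.Surjective P)
    (N : Z → Set Z) (hN : SetValuedMonotoneP P N) (hMN : ∀ x, P ⁻¹' M x ⊆ N x) (x : Z) :
    N x ⊆ P ⁻¹' M x := by
  have hMPN : ∀ y, M y ⊆ P '' N y := fun y => by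
    rw [← Set.image_preimage_eq (M y) hP]
    exact Set.image_mono (hMN y)
  exact Set.image_subset_iff.mp (hM.2 _ hN.image hMPN x)

theorem SetValuedMonotoneP.inner_resolvent_le {P : Z →L[ℝ] Z}
    (hPsa : ∀ x y : Z, ⟪P x, y⟫ = ⟪x, P y⟫) {A : Z → Set Z} (hA : SetValuedMonotoneP P A)
    {J : Z → Z} (hJ : ∀ z, z - J z ∈ A (J z)) (z z' : Z) :
    ⟪J z - J z', P (J z - J z')⟫ ≤ ⟪z - z', P (J z - J z')⟫ := by
  have h := hA (hJ z) (hJ z')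
  have hsym : ⟪J z - J z', P (z - z')⟫ = ⟪z - z', P (J z - J z')⟫ := by
    rw [real_inner_comm, hPsa]
  rw [sub_sub_sub_comm, map_sub, inner_sub_right, hsym] at h
  linarith

end

/-- Let `P` be a self-adjoint strongly positive bounded linear operator on a real Hilbert
space `Z` and `M` maximally monotone on `Z`. Then `P⁻¹ M` (the operator
`x ↦ {u : P u ∈ M x}`) is maximally monotone in the Hilbert space `Z_P` with inner product
`⟨x, x'⟩_P = ⟨x, P x'⟩`, and consequently its resolvent `(P⁻¹ M + Id)⁻¹` (any `J` with
`P (z - J z) ∈ M (J z)` for all `z`) is firmly nonexpansive with respect to `‖·‖_P`. -/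
theorem preconditioned_operator_maximally_monotone {Z : Type*} [NormedAddCommGroup Z]
    [InnerProductSpace ℝ Z] [CompleteSpace Z]
    (P : Z →L[ℝ] Z) (hPsa : ∀ x y : Z, (⟪P x, y⟫ : ℝ) = ⟪x, P y⟫)
    (hPpos : ∃ a : ℝ, 0 < a ∧ ∀ x : Z, a * ‖x‖ ^ 2 ≤ ⟪x, P x⟫)
    (M : Z → Set Z) (hM : SetValuedMaximallyMonotone M) :
    (SetValuedMonotoneP P (fun x => {u : Z | P u ∈ M x}) ∧
      ∀ N : Z → Set Z, SetValuedMonotoneP P N →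
        (∀ x, {u : Z | P u ∈ M x} ⊆ N x) → ∀ x, N x ⊆ {u : Z | P u ∈ M x}) ∧
      ∀ J : Z → Z, (∀ z : Z, P (z - J z) ∈ M (J z)) →
        ∀ z z' : Z, (⟪J z - J z', P (J z - J z')⟫ : ℝ) ≤ ⟪z - z', P (J z - J z')⟫ := by
  obtain ⟨a, ha, hPa⟩ := hPpos
  have hmono := hM.1.preimage P
  exact ⟨⟨hmono, hM.preimage_maximal (P.surjective_of_coercive ha hPa)⟩,
    fun J hJ => hmono.inner_resolvent_le hPsa hJ⟩
end

section
/- Let M be maximally monotone on Z with nonempty zero set and P self-adjoint strongly positive bounded linear. For any z⁽⁰⁾ ∈ Z and any sequence (ρ⁽ⁱ⁾) in [0,2] with Σᵢ ρ⁽ⁱ⁾(2 − ρ⁽ⁱ⁾) = +∞, the relaxed preconditioned proximal point iteration z⁽ⁱ⁺½⁾ = (P⁻¹M + Id)⁻¹ z⁽ⁱ⁾, z⁽ⁱ⁺¹⁾ = z⁽ⁱ⁾ + ρ⁽ⁱ⁾(z⁽ⁱ⁺½⁾ − z⁽ⁱ⁾) converges weakly to a zero of M. -/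
open RealInnerProductSpace Filter

/-!
In the metric `‖x‖²_P = P.quadForm x = ⟪x, P x⟫`, the preconditioned resolvent `J` is firmly
nonexpansive, because `(J x, P (x - J x))` lies in the graph of the monotone operator `M`. Hence
the iterates are Fejér monotone with respect to the zeros of `M`, each step gaining
`ρ (2 - ρ) ‖z - J z‖²_P`; the residual `‖z - J z‖_P` is nonincreasing as well, so
`Σ ρ (2 - ρ) = ∞` forces it to `0`. Since the graph of a maximally monotone operator is closed for
weak × strong convergence, every weak cluster point of the iterates is a zero of `M`, and Opial's
argument (the `P`-distances to two zeros both converge) shows that there is only one such cluster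
point.
-/

open Topology

section Weak

variable {Z : Type*} [NormedAddCommGroup Z] [InnerProductSpace ℝ Z] {ι : Type*}

def TendstoWeakly (f : ι → Z) (l : Filter ι) (x : Z) : Prop :=
  ∀ w, Tendsto (fun i => ⟪f i, w⟫) l (𝓝 ⟪x, w⟫)

theorem Filter.Tendsto.tendstoWeakly {f : ι → Z} {l : Filter ι} {x : Z} (h : Tendsto f l (𝓝 x)) :
    TendstoWeakly f l x :=
  fun _ => h.inner tendsto_const_nhds

theorem TendstoWeakly.sub {f g : ι → Z} {l : Filter ι} {x y : Z} (hf : TendstoWeakly f l x)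
    (hg : TendstoWeakly g l y) : TendstoWeakly (fun i => f i - g i) l (x - y) := fun w => by
  simpa only [inner_sub_left] using (hf w).sub (hg w)

theorem exists_tendstoWeakly_of_norm_le [CompleteSpace Z] {f : ι → Z} {C : ℝ}
    (hC : ∀ i, ‖f i‖ ≤ C) (U : Ultrafilter ι) : ∃ x, TendstoWeakly f U x := by
  let φ : ι → WeakDual ℝ Z := fun i => StrongDual.toWeakDual (InnerProductSpace.toDual ℝ Z (f i))
  have hφ : ∀ i, φ i ∈ WeakDual.toStrongDual ⁻¹' Metric.closedBall 0 C := fun i => by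
    simpa [φ] using hC i
  obtain ⟨ℓ, -, hℓ⟩ := (WeakDual.isCompact_closedBall 0 C).ultrafilter_le_nhds (U.map φ)
    (le_principal_iff.2 (mem_map.2 (univ_mem' hφ)))
  refine ⟨(InnerProductSpace.toDual ℝ Z).symm (WeakDual.toStrongDual ℓ), fun w => ?_⟩
  rw [InnerProductSpace.toDual_symm_apply]
  exact ((WeakDual.eval_continuous w).tendsto ℓ).comp hℓ

end Weak

namespace SetValuedMaximallyMonotone

variable {Z : Type*} [NormedAddCommGroup Z] [InnerProductSpace ℝ Z] {M : Z → Set Z}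

theorem mem_of_forall_inner_nonneg (hM : SetValuedMaximallyMonotone M) {x u : Z}
    (h : ∀ y v, v ∈ M y → 0 ≤ ⟪x - y, u - v⟫) : u ∈ M x := by
  let N : Z → Set Z := fun y => M y ∪ {v | y = x ∧ v = u}
  have hN : SetValuedMonotone N := by
    rintro y y' v v' (hv | ⟨rfl, rfl⟩) (hv' | ⟨rfl, rfl⟩)
    · exact hM.1 hv hv'
    · rw [← neg_sub, ← neg_sub v', inner_neg_neg]
      exact h y v hv
    · exact h y' v' hv'
    · simp
  exact hM.2 N hN (fun _ => Set.subset_union_left) x (Or.inr ⟨rfl, rfl⟩)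

theorem mem_of_tendstoWeakly {ι : Type*} {l : Filter ι} [l.NeBot]
    (hM : SetValuedMaximallyMonotone M) {x u : ι → Z} {x₀ u₀ : Z} (hmem : ∀ i, u i ∈ M (x i))
    (hx : TendstoWeakly x l x₀) (hxb : IsBoundedUnder (· ≤ ·) l fun i => ‖x i‖)
    (hu : Tendsto u l (𝓝 u₀)) : u₀ ∈ M x₀ := by
  refine hM.mem_of_forall_inner_nonneg fun y v hv => ?_
  have hsplit : ∀ i, ⟪x i - y, u i - v⟫ = ⟪x i - y, u i - u₀⟫ + ⟪x i - y, u₀ - v⟫ := fun i => by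
    rw [← inner_add_right, sub_add_sub_cancel]
  have hxyb : IsBoundedUnder (· ≤ ·) l (norm ∘ fun i => x i - y) := by
    obtain ⟨C, hC⟩ := hxb
    exact isBoundedUnder_of_eventually_le (a := C + ‖y‖)
      ((eventually_map.1 hC).mono fun i hi => (norm_sub_le _ _).trans (by simpa using hi))
  have hfar : Tendsto (fun i => ⟪x i - y, u i - u₀⟫) l (𝓝 0) :=
    (tendsto_sub_nhds_zero_iff.2 hu).op_zero_isBoundedUnder_le hxyb (fun a b => ⟪b, a⟫)
      fun a b => (norm_inner_le_norm b a).trans_eq (mul_comm _ _)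
  have hnear : Tendsto (fun i => ⟪x i - y, u₀ - v⟫) l (𝓝 ⟪x₀ - y, u₀ - v⟫) :=
    (hx.sub (tendsto_const_nhds (x := y)).tendstoWeakly) (u₀ - v)
  have hlim : Tendsto (fun i => ⟪x i - y, u i - v⟫) l (𝓝 ⟪x₀ - y, u₀ - v⟫) := by
    simpa only [hsplit, zero_add] using hfar.add hnear
  exact ge_of_tendsto hlim (Eventually.of_forall fun i => hM.1 (hmem i) hv)

end SetValuedMaximallyMonotone

theorem summable_of_succ_add_le {e c : ℕ → ℝ} (he : ∀ i, 0 ≤ e i) (hc : ∀ i, 0 ≤ c i)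
    (h : ∀ i, e (i + 1) + c i ≤ e i) : Summable c := by
  refine summable_of_sum_range_le (c := e 0) hc fun n => ?_
  have htel : ∑ i ∈ Finset.range n, c i ≤ e 0 - e n := by
    induction n with
    | zero => simp
    | succ n ih => rw [Finset.sum_range_succ]; linarith [h n]
  linarith [he n]

theorem tendsto_zero_of_antitone_of_summable_mul_s7 {d w : ℕ → ℝ} (hd : Antitone d)
    (hd0 : ∀ i, 0 ≤ d i) (hw : ∀ i, 0 ≤ w i) (hwd : Summable fun i => w i * d i)
    (hw' : ¬ Summable w) : Tendsto d atTop (𝓝 0) := by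
  have hbdd : BddBelow (Set.range d) := ⟨0, Set.forall_mem_range.2 hd0⟩
  have hlim := tendsto_atTop_ciInf hd hbdd
  suffices h : ⨅ i, d i = 0 by rwa [h] at hlim
  by_contra hne
  have hpos : 0 < ⨅ i, d i := (le_ciInf hd0).lt_of_ne' hne
  refine hw' (Summable.of_nonneg_of_le hw (fun i => ?_) (hwd.div_const (⨅ i, d i)))
  rw [le_div_iff₀ hpos]
  exact mul_le_mul_of_nonneg_left (ciInf_le hbdd i) (hw i)

namespace ContinuousLinearMap

variable {Z : Type*} [NormedAddCommGroup Z] [InnerProductSpace ℝ Z] {P : Z →L[ℝ] Z}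

def quadForm (P : Z →L[ℝ] Z) (x : Z) : ℝ := ⟪x, P x⟫

theorem IsPositive.quadForm_nonneg (hP : P.IsPositive) (x : Z) : 0 ≤ P.quadForm x :=
  hP.inner_nonneg_right x

theorem IsPositive.inner_map_comm (hP : P.IsPositive) (x y : Z) : ⟪y, P x⟫ = ⟪x, P y⟫ := by
  rw [real_inner_comm, hP.inner_left_eq_inner_right]

theorem IsPositive.quadForm_sub (hP : P.IsPositive) (x y : Z) :
    P.quadForm (x - y) = P.quadForm x - 2 * ⟪x, P y⟫ + P.quadForm y := by
  simp only [quadForm, map_sub, inner_sub_left, inner_sub_right, hP.inner_map_comm x y]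
  ring

theorem quadForm_smul (c : ℝ) (x : Z) : P.quadForm (c • x) = c ^ 2 * P.quadForm x := by
  simp only [quadForm, map_smul, real_inner_smul_left, real_inner_smul_right]
  ring

theorem eq_zero_of_quadForm_nonpos {a : ℝ} (ha : 0 < a) (hPa : ∀ x, a * ‖x‖ ^ 2 ≤ P.quadForm x)
    {x : Z} (hx : P.quadForm x ≤ 0) : x = 0 := by
  simpa using nonpos_of_mul_nonpos_right ((hPa x).trans hx) ha

theorem norm_le_sqrt_of_quadForm_le {a c : ℝ} (ha : 0 < a)
    (hPa : ∀ x, a * ‖x‖ ^ 2 ≤ P.quadForm x) {x : Z} (h : P.quadForm x ≤ c) : ‖x‖ ≤ √(c / a) :=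
  Real.le_sqrt_of_sq_le ((le_div_iff₀ ha).2 (by linarith [hPa x]))

theorem norm_le_of_quadForm_sub_le {a c : ℝ} (ha : 0 < a) (hPa : ∀ x, a * ‖x‖ ^ 2 ≤ P.quadForm x)
    {x y : Z} (h : P.quadForm (x - y) ≤ c) : ‖x‖ ≤ ‖y‖ + √(c / a) := by
  linarith [norm_le_norm_sub_add x y, norm_le_sqrt_of_quadForm_le ha hPa h]

theorem tendsto_zero_of_tendsto_quadForm {ι : Type*} {l : Filter ι} {a : ℝ} (ha : 0 < a)
    (hPa : ∀ x, a * ‖x‖ ^ 2 ≤ P.quadForm x) {r : ι → Z}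
    (h : Tendsto (fun i => P.quadForm (r i)) l (𝓝 0)) : Tendsto r l (𝓝 0) := by
  refine tendsto_zero_iff_norm_tendsto_zero.2 (squeeze_zero (fun i => norm_nonneg _)
    (fun i => norm_le_sqrt_of_quadForm_le ha hPa le_rfl) ?_)
  simpa using (h.div_const a).sqrt

theorem IsPositive.eq_of_tendstoWeakly_of_tendsto_quadForm_sub (hP : P.IsPositive) {a : ℝ}
    (ha : 0 < a) (hPa : ∀ x, a * ‖x‖ ^ 2 ≤ P.quadForm x) {ι : Type*} {l l₁ l₂ : Filter ι}
    [l₁.NeBot] [l₂.NeBot] (hl₁ : l₁ ≤ l) (hl₂ : l₂ ≤ l) {z : ι → Z} {x₁ x₂ : Z} {L₁ L₂ : ℝ}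
    (hL₁ : Tendsto (fun i => P.quadForm (z i - x₁)) l (𝓝 L₁))
    (hL₂ : Tendsto (fun i => P.quadForm (z i - x₂)) l (𝓝 L₂))
    (h₁ : TendstoWeakly z l₁ x₁) (h₂ : TendstoWeakly z l₂ x₂) : x₁ = x₂ := by
  have hpolar : ∀ i, ⟪z i, P (x₁ - x₂)⟫ = (P.quadForm (z i - x₂) - P.quadForm (z i - x₁)
      + P.quadForm x₁ - P.quadForm x₂) / 2 := fun i => by
    rw [hP.quadForm_sub, hP.quadForm_sub, map_sub, inner_sub_right]
    ring
  have hconv : Tendsto (fun i => ⟪z i, P (x₁ - x₂)⟫) l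
      (𝓝 ((L₂ - L₁ + P.quadForm x₁ - P.quadForm x₂) / 2)) := by
    simpa only [hpolar] using (((hL₂.sub hL₁).add_const _).sub_const _).div_const 2
  have e₁ := tendsto_nhds_unique (h₁ _) (hconv.mono_left hl₁)
  have e₂ := tendsto_nhds_unique (h₂ _) (hconv.mono_left hl₂)
  refine sub_eq_zero.1 (eq_zero_of_quadForm_nonpos ha hPa ?_)
  rw [quadForm, inner_sub_left, e₁, e₂, sub_self]

theorem IsPositive.exists_tendstoWeakly_of_antitone_quadForm_sub [CompleteSpace Z]
    (hP : P.IsPositive) {a : ℝ} (ha : 0 < a) (hPa : ∀ x, a * ‖x‖ ^ 2 ≤ P.quadForm x)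
    {F : Set Z} {y₀ : Z} (hy₀ : y₀ ∈ F) {z : ℕ → Z}
    (hfejer : ∀ y ∈ F, Antitone fun i => P.quadForm (z i - y))
    (hclust : ∀ U : Ultrafilter ℕ, (U : Filter ℕ) ≤ atTop → ∀ x, TendstoWeakly z U x → x ∈ F) :
    ∃ x ∈ F, TendstoWeakly z atTop x := by
  have hbdd : ∀ i, ‖z i‖ ≤ ‖y₀‖ + √(P.quadForm (z 0 - y₀) / a) := fun i =>
    norm_le_of_quadForm_sub_le ha hPa (hfejer y₀ hy₀ (Nat.zero_le i))
  have hlim : ∀ y ∈ F, Tendsto (fun i => P.quadForm (z i - y)) atTop (𝓝 _) := fun y hy =>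
    tendsto_atTop_ciInf (hfejer y hy) ⟨0, Set.forall_mem_range.2 fun i => hP.quadForm_nonneg _⟩
  obtain ⟨x, hx⟩ := exists_tendstoWeakly_of_norm_le hbdd (Ultrafilter.of atTop)
  have hxF := hclust _ (Ultrafilter.of_le atTop) x hx
  refine ⟨x, hxF, fun w => (tendsto_iff_ultrafilter _ _ _).2 fun U hU => ?_⟩
  obtain ⟨x', hx'⟩ := exists_tendstoWeakly_of_norm_le hbdd U
  have hx'F := hclust U hU x' hx'
  rw [hP.eq_of_tendstoWeakly_of_tendsto_quadForm_sub ha hPa (Ultrafilter.of_le atTop) hU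
    (hlim x hxF) (hlim x' hx'F) hx hx']
  exact hx' w

end ContinuousLinearMap

open ContinuousLinearMap

section Resolvent

variable {Z : Type*} [NormedAddCommGroup Z] [InnerProductSpace ℝ Z] {M : Z → Set Z}
  {P : Z →L[ℝ] Z} {J : Z → Z}

theorem resolvent_eq_self_of_zero_mem {a : ℝ} (ha : 0 < a) (hPa : ∀ x, a * ‖x‖ ^ 2 ≤ P.quadForm x)
    (hM : SetValuedMonotone M) (hJ : ∀ z, P (z - J z) ∈ M (J z)) {y : Z} (hy : 0 ∈ M y) :
    J y = y := by
  have h := hM (hJ y) hy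
  rw [sub_zero, ← neg_sub y, inner_neg_left, neg_nonneg] at h
  exact (sub_eq_zero.1 (eq_zero_of_quadForm_nonpos ha hPa h)).symm

theorem quadForm_relaxed_sub_add_le (hP : P.IsPositive) (hM : SetValuedMonotone M)
    (hJ : ∀ z, P (z - J z) ∈ M (J z)) {x y : Z} (hy : J y = y) {ρ : ℝ} (hρ : 0 ≤ ρ) :
    P.quadForm (x + ρ • (J x - x) - y) + ρ * (2 - ρ) * P.quadForm (x - J x)
      ≤ P.quadForm (x - y) := by
  have hmono : 0 ≤ ⟪J x - y, P (x - J x)⟫ := by simpa [hy] using hM (hJ x) (hJ y)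
  have hsplit : ⟪x - y, P (x - J x)⟫ = P.quadForm (x - J x) + ⟪J x - y, P (x - J x)⟫ := by
    rw [quadForm, ← inner_add_left, sub_add_sub_cancel]
  rw [show x + ρ • (J x - x) - y = (x - y) - ρ • (x - J x) by module, hP.quadForm_sub,
    quadForm_smul, map_smul, real_inner_smul_right, hsplit]
  nlinarith [mul_nonneg hρ hmono]

theorem quadForm_relaxed_residual_le (hP : P.IsPositive) (hM : SetValuedMonotone M)
    (hJ : ∀ z, P (z - J z) ∈ M (J z)) (x : Z) {ρ : ℝ} (hρ : ρ ∈ Set.Icc (0 : ℝ) 2) :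
    P.quadForm (x + ρ • (J x - x) - J (x + ρ • (J x - x))) ≤ P.quadForm (x - J x) := by
  set x' := x + ρ • (J x - x)
  rcases hρ.1.eq_or_lt with rfl | hρ0
  · simp [x']
  set r := x - J x
  set r' := x' - J x'
  -- Monotonicity of `M` at `x` and `x'`, together with `2 ⟪r, P r'⟫ ≤ ‖r‖²_P + ‖r'‖²_P`,
  -- yields `ρ ‖r'‖²_P ≤ ρ ‖r‖²_P`.
  have hmono : 0 ≤ ⟪(ρ - 1) • r + r', P (r - r')⟫ := by
    have : J x - J x' = (ρ - 1) • r + r' := by simp only [x', r, r']; module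
    have h := hM (hJ x) (hJ x')
    rwa [← map_sub, this] at h
  have hcross := hP.quadForm_nonneg (r - r')
  rw [hP.quadForm_sub] at hcross
  simp only [inner_add_left, real_inner_smul_left, map_sub, inner_sub_right,
    hP.inner_map_comm r r'] at hmono
  simp only [quadForm] at hcross ⊢
  nlinarith [hρ.2]

theorem quadForm_resolvent_sub_le (hP : P.IsPositive) (hM : SetValuedMonotone M)
    (hJ : ∀ z, P (z - J z) ∈ M (J z)) {x y : Z} (hy : J y = y) :
    P.quadForm (J x - y) ≤ P.quadForm (x - y) := by
  have h := quadForm_relaxed_sub_add_le hP hM hJ (x := x) hy zero_le_one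
  rw [one_smul, add_sub_cancel] at h
  linarith [hP.quadForm_nonneg (x - J x)]

variable {ρ : ℕ → ℝ} {z : ℕ → Z}

theorem relaxed_quadForm_sub_succ_add_le (hP : P.IsPositive) (hM : SetValuedMonotone M)
    (hJ : ∀ z, P (z - J z) ∈ M (J z)) (hρ : ∀ i, ρ i ∈ Set.Icc (0 : ℝ) 2)
    (hrec : ∀ i, z (i + 1) = z i + ρ i • (J (z i) - z i)) {y : Z} (hy : J y = y) (i : ℕ) :
    P.quadForm (z (i + 1) - y) + ρ i * (2 - ρ i) * P.quadForm (z i - J (z i))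
      ≤ P.quadForm (z i - y) := by
  rw [hrec]
  exact quadForm_relaxed_sub_add_le hP hM hJ hy (hρ i).1

theorem antitone_relaxed_quadForm_sub (hP : P.IsPositive) (hM : SetValuedMonotone M)
    (hJ : ∀ z, P (z - J z) ∈ M (J z)) (hρ : ∀ i, ρ i ∈ Set.Icc (0 : ℝ) 2)
    (hrec : ∀ i, z (i + 1) = z i + ρ i • (J (z i) - z i)) {y : Z} (hy : J y = y) :
    Antitone fun i => P.quadForm (z i - y) :=
  antitone_nat_of_succ_le fun i => by
    have hgain : 0 ≤ ρ i * (2 - ρ i) * P.quadForm (z i - J (z i)) :=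
      mul_nonneg (mul_nonneg (hρ i).1 (sub_nonneg.2 (hρ i).2)) (hP.quadForm_nonneg _)
    linarith [relaxed_quadForm_sub_succ_add_le hP hM hJ hρ hrec hy i]

theorem tendsto_relaxed_residual_zero (hP : P.IsPositive) {a : ℝ} (ha : 0 < a)
    (hPa : ∀ x, a * ‖x‖ ^ 2 ≤ P.quadForm x) (hM : SetValuedMonotone M)
    (hJ : ∀ z, P (z - J z) ∈ M (J z)) (hρ : ∀ i, ρ i ∈ Set.Icc (0 : ℝ) 2)
    (hdiv : ¬ Summable fun i => ρ i * (2 - ρ i))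
    (hrec : ∀ i, z (i + 1) = z i + ρ i • (J (z i) - z i)) {y : Z} (hy : J y = y) :
    Tendsto (fun i => z i - J (z i)) atTop (𝓝 0) := by
  have hw : ∀ i, 0 ≤ ρ i * (2 - ρ i) := fun i => mul_nonneg (hρ i).1 (sub_nonneg.2 (hρ i).2)
  have hsum : Summable fun i => ρ i * (2 - ρ i) * P.quadForm (z i - J (z i)) :=
    summable_of_succ_add_le (e := fun i => P.quadForm (z i - y)) (fun i => hP.quadForm_nonneg _)
      (fun i => mul_nonneg (hw i) (hP.quadForm_nonneg _))
      (relaxed_quadForm_sub_succ_add_le hP hM hJ hρ hrec hy)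
  have hanti : Antitone fun i => P.quadForm (z i - J (z i)) :=
    antitone_nat_of_succ_le fun i => by
      rw [hrec]
      exact quadForm_relaxed_residual_le hP hM hJ (z i) (hρ i)
  exact tendsto_zero_of_tendsto_quadForm ha hPa
    (tendsto_zero_of_antitone_of_summable_mul_s7 hanti (fun i => hP.quadForm_nonneg _) hw hsum hdiv)

end Resolvent

/-- **Convergence of the relaxed preconditioned proximal point algorithm.** Let `M` be
maximally monotone on `Z` with nonempty zero set and `P` self-adjoint strongly positive
bounded linear. For any `z 0` and any sequence `(ρ i)` in `[0, 2]` with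
`Σ_i ρ i (2 - ρ i) = +∞`, the iteration `z (i+1) = z i + ρ i • (J (z i) - z i)`, where
`J = (P⁻¹ M + Id)⁻¹` is the preconditioned resolvent (`P (z - J z) ∈ M (J z)` for all `z`),
converges weakly to a zero of `M`. -/
theorem preconditioned_proximal_point_convergence {Z : Type*} [NormedAddCommGroup Z]
    [InnerProductSpace ℝ Z] [CompleteSpace Z]
    (M : Z → Set Z) (hM : SetValuedMaximallyMonotone M)
    (hzero : ∃ z : Z, (0 : Z) ∈ M z)
    (P : Z →L[ℝ] Z) (hPsa : ∀ x y : Z, (⟪P x, y⟫ : ℝ) = ⟪x, P y⟫)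
    (hPpos : ∃ a : ℝ, 0 < a ∧ ∀ x : Z, a * ‖x‖ ^ 2 ≤ ⟪x, P x⟫)
    (J : Z → Z) (hJ : ∀ z : Z, P (z - J z) ∈ M (J z))
    (ρ : ℕ → ℝ) (hρ : ∀ i, ρ i ∈ Set.Icc (0 : ℝ) 2)
    (hdiv : ¬ Summable (fun i => ρ i * (2 - ρ i)))
    (z : ℕ → Z) (hrec : ∀ i, z (i + 1) = z i + ρ i • (J (z i) - z i)) :
    ∃ zstar : Z, (0 : Z) ∈ M zstar ∧
      ∀ w : Z, Tendsto (fun i => (⟪z i, w⟫ : ℝ)) atTop (nhds ⟪zstar, w⟫) := by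
  obtain ⟨a, ha, hPa⟩ := hPpos
  obtain ⟨y₀, hy₀⟩ := hzero
  have hP : P.IsPositive := P.isPositive_iff.2 ⟨hPsa, fun x => by
    rw [real_inner_comm]; exact (by positivity : 0 ≤ a * ‖x‖ ^ 2).trans (hPa x)⟩
  have hfix : ∀ y, 0 ∈ M y → J y = y := fun y hy =>
    resolvent_eq_self_of_zero_mem ha hPa hM.1 hJ hy
  have hres := tendsto_relaxed_residual_zero hP ha hPa hM.1 hJ hρ hdiv hrec (hfix y₀ hy₀)
  have hJbdd : ∀ i, ‖J (z i)‖ ≤ ‖y₀‖ + √(P.quadForm (z 0 - y₀) / a) := fun i =>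
    norm_le_of_quadForm_sub_le ha hPa ((quadForm_resolvent_sub_le hP hM.1 hJ (hfix y₀ hy₀)).trans
      (antitone_relaxed_quadForm_sub hP hM.1 hJ hρ hrec (hfix y₀ hy₀) (Nat.zero_le i)))
  refine hP.exists_tendstoWeakly_of_antitone_quadForm_sub ha hPa (F := {y | 0 ∈ M y}) hy₀
    (fun y hy => antitone_relaxed_quadForm_sub hP hM.1 hJ hρ hrec (hfix y hy)) fun U hU x hx => ?_
  have hJx : TendstoWeakly (fun i => J (z i)) U x := by
    simpa only [sub_sub_cancel, sub_zero] using hx.sub (hres.mono_left hU).tendstoWeakly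
  have hPres : Tendsto (fun i => P (z i - J (z i))) U (𝓝 0) := by
    simpa only [map_zero, Function.comp_def] using ((P.continuous.tendsto 0).comp hres).mono_left hU
  exact hM.mem_of_tendstoWeakly (fun i => hJ (z i)) hJx (isBoundedUnder_of ⟨_, hJbdd⟩) hPres
end

section
/- Let f, g ∈ Γ₀(X) with 0 ∈ ∂f(x⋆) + ∂g(x⋆) for some x⋆, and τ > 0. If s⋆ is a fixed point of the Douglas–Rachford operator s ↦ s + prox_{τg}(2 prox_{τf}(s) − s) − prox_{τf}(s), then x = prox_{τf}(s⋆) satisfies 0 ∈ ∂f(x) + ∂g(x), i.e., x minimizes f + g over points satisfying the inclusion. -/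
/-
The proximal point `p = prox_{τf}(s)` satisfies `(s - p) / τ ∈ ∂f(p)`: comparing `p` with the
points `p + t (y - p)` of the segment towards any `y` and letting `t → 0⁺` gives the
subgradient inequality. At a fixed point `s⋆` of the Douglas–Rachford operator,
`x = prox_{τf}(s⋆)` is also `prox_{τg}(2x - s⋆)`, so `(s⋆ - x) / τ ∈ ∂f(x)` and
`(x - s⋆) / τ ∈ ∂g(x)`, and these sum to zero.
-/

open RealInnerProductSpace

def Subdiff {X : Type*} [NormedAddCommGroup X] [InnerProductSpace ℝ X]
    (f : X → ℝ) (x : X) : Set X :=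
  {u : X | ∀ y : X, f x + ⟪y - x, u⟫ ≤ f y}

open Set Filter Topology

lemma le_of_forall_le_add_mul {a b c : ℝ} (h : ∀ t ∈ Ioc (0 : ℝ) 1, a ≤ b + t * c) : a ≤ b := by
  have hlim : Tendsto (fun t : ℝ => b + t * c) (𝓝[>] 0) (𝓝 b) := by
    have hcont : Continuous fun t : ℝ => b + t * c := by fun_prop
    simpa using (hcont.tendsto 0).mono_left nhdsWithin_le_nhds
  exact ge_of_tendsto hlim (eventually_of_mem (Ioc_mem_nhdsGT one_pos) h)

section Prox

variable {X : Type*} [NormedAddCommGroup X] [InnerProductSpace ℝ X] {f : X → ℝ} {τ : ℝ} {s p : X}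

lemma inner_sub_le_of_isProx (hf : ConvexOn ℝ univ f) (hτ : 0 ≤ τ)
    (hp : ∀ y : X, τ * f p + (1 / 2) * ‖s - p‖ ^ 2 ≤ τ * f y + (1 / 2) * ‖s - y‖ ^ 2) (y : X) :
    ⟪s - p, y - p⟫ ≤ τ * (f y - f p) := by
  refine le_of_forall_le_add_mul (c := ‖y - p‖ ^ 2 / 2) fun t ⟨ht0, ht1⟩ => ?_
  have hconv : f (p + t • (y - p)) ≤ (1 - t) * f p + t * f y := by
    have hseg : p + t • (y - p) = (1 - t) • p + t • y := by module
    simpa only [hseg, smul_eq_mul] using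
      hf.2 (mem_univ p) (mem_univ y) (sub_nonneg.2 ht1) ht0.le (by ring)
  have hnorm : ‖s - (p + t • (y - p))‖ ^ 2
      = ‖s - p‖ ^ 2 - 2 * t * ⟪s - p, y - p⟫ + t ^ 2 * ‖y - p‖ ^ 2 := by
    rw [show s - (p + t • (y - p)) = (s - p) - t • (y - p) by abel, norm_sub_sq_real,
      real_inner_smul_right, norm_smul, Real.norm_eq_abs, abs_of_pos ht0]
    ring
  have hscaled : t * ⟪s - p, y - p⟫ ≤ t * (τ * (f y - f p) + t * (‖y - p‖ ^ 2 / 2)) := by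
    nlinarith [hp (p + t • (y - p)), mul_le_mul_of_nonneg_left hconv hτ]
  exact le_of_mul_le_mul_left hscaled ht0

lemma inv_smul_sub_mem_subdiff_of_isProx (hf : ConvexOn ℝ univ f) (hτ : 0 < τ)
    (hp : ∀ y : X, τ * f p + (1 / 2) * ‖s - p‖ ^ 2 ≤ τ * f y + (1 / 2) * ‖s - y‖ ^ 2) :
    τ⁻¹ • (s - p) ∈ Subdiff f p := by
  intro y
  have key := mul_le_mul_of_nonneg_left (inner_sub_le_of_isProx hf hτ.le hp y)
    (inv_nonneg.2 hτ.le)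
  rw [← mul_assoc, inv_mul_cancel₀ hτ.ne', one_mul] at key
  rw [real_inner_smul_right, real_inner_comm]
  linarith

end Prox

theorem douglas_rachford_fixed_point_solution_general {X : Type*} [NormedAddCommGroup X]
    [InnerProductSpace ℝ X]
    (f g : X → ℝ) (hfconv : ConvexOn ℝ Set.univ f)
    (hgconv : ConvexOn ℝ Set.univ g)
    (τ : ℝ) (hτ : 0 < τ) (pf pg : X → X)
    (hpf : ∀ s y : X, τ * f (pf s) + (1 / 2) * ‖s - pf s‖ ^ 2
      ≤ τ * f y + (1 / 2) * ‖s - y‖ ^ 2)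
    (hpg : ∀ s y : X, τ * g (pg s) + (1 / 2) * ‖s - pg s‖ ^ 2
      ≤ τ * g y + (1 / 2) * ‖s - y‖ ^ 2)
    (sstar : X)
    (hfix : sstar + pg ((2 : ℝ) • pf sstar - sstar) - pf sstar = sstar) :
    ∃ u ∈ Subdiff f (pf sstar), ∃ v ∈ Subdiff g (pf sstar), u + v = 0 := by
  set x := pf sstar
  have hreflect : pg ((2 : ℝ) • x - sstar) = x := by
    rwa [add_sub_assoc, add_eq_left, sub_eq_zero] at hfix
  have hg := inv_smul_sub_mem_subdiff_of_isProx hgconv hτ (hpg ((2 : ℝ) • x - sstar))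
  rw [hreflect] at hg
  refine ⟨_, inv_smul_sub_mem_subdiff_of_isProx hfconv hτ (hpf sstar), _, hg, ?_⟩
  module

/-- Let `f, g` be convex lower semicontinuous functions on a real Hilbert space, with
`0 ∈ ∂f(x⋆) + ∂g(x⋆)` for some `x⋆`, and `τ > 0`. If `sstar` is a fixed point of the
Douglas–Rachford operator `s ↦ s + prox_{τ g}(2 prox_{τ f}(s) - s) - prox_{τ f}(s)`,
then `x = prox_{τ f}(sstar)` satisfies `0 ∈ ∂f(x) + ∂g(x)`. -/
theorem douglas_rachford_fixed_point_solution {X : Type*} [NormedAddCommGroup X]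
    [InnerProductSpace ℝ X] [CompleteSpace X]
    (f g : X → ℝ) (hfconv : ConvexOn ℝ Set.univ f) (hflsc : LowerSemicontinuous f)
    (hgconv : ConvexOn ℝ Set.univ g) (hglsc : LowerSemicontinuous g)
    (hsol : ∃ xstar : X, (0 : X) ∈ (fun p : X × X => p.1 + p.2) '' (Subdiff f xstar ×ˢ Subdiff g xstar))
    (τ : ℝ) (hτ : 0 < τ) (pf pg : X → X)
    (hpf : ∀ s y : X, τ * f (pf s) + (1 / 2) * ‖s - pf s‖ ^ 2
      ≤ τ * f y + (1 / 2) * ‖s - y‖ ^ 2)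
    (hpg : ∀ s y : X, τ * g (pg s) + (1 / 2) * ‖s - pg s‖ ^ 2
      ≤ τ * g y + (1 / 2) * ‖s - y‖ ^ 2)
    (sstar : X)
    (hfix : sstar + pg ((2 : ℝ) • pf sstar - sstar) - pf sstar = sstar) :
    ∃ u ∈ Subdiff f (pf sstar), ∃ v ∈ Subdiff g (pf sstar), u + v = 0 :=
  douglas_rachford_fixed_point_solution_general f g hfconv hgconv τ hτ pf pg hpf hpg sstar hfix
end

section
/- Let f ∈ Γ₀(X), g ∈ Γ₀(U), L : X → U bounded linear, and τ, σ > 0 with τσ‖L‖² < 1. Then the operator P on X × U defined by the block matrix P(x,u) = ((1/τ)x − L*u, −Lx + (1/σ)u) is self-adjoint, bounded, and strongly positive. -/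
open RealInnerProductSpace

/-!
The quadratic form of `P` is `‖x‖²/τ + ‖u‖²/σ - 2⟪L x, u⟫`, which by Cauchy–Schwarz dominates
the binary form `s²/τ + t²/σ - 2‖L‖ s t` at `s = ‖x‖`, `t = ‖u‖`. The hypothesis
`τσ‖L‖² < 1` says that this binary form has positive determinant `1/(τσ) - ‖L‖²`, and its
smallest eigenvalue is at least determinant over trace.
-/

lemma sq_le_sq_add_sq_mul_sq_add_sq_of_le_mul_add_mul {r α β s t : ℝ} (hr : 0 ≤ r)
    (h : r ≤ α * s + β * t) : r ^ 2 ≤ (α ^ 2 + β ^ 2) * (s ^ 2 + t ^ 2) := by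
  nlinarith [sq_nonneg (α * t - β * s)]

lemma det_div_trace_mul_sq_add_sq_le {a b c : ℝ} (ha : 0 < a) (hb : 0 < b) (hc : c ^ 2 ≤ a * b)
    (s t : ℝ) :
    (a * b - c ^ 2) / (a + b) * (s ^ 2 + t ^ 2) ≤ a * s ^ 2 + b * t ^ 2 - 2 * c * s * t := by
  set m := (a * b - c ^ 2) / (a + b)
  have hm : m * (a + b) = a * b - c ^ 2 := div_mul_cancel₀ _ (by positivity)
  have hm0 : 0 ≤ m := div_nonneg (by linarith) (by positivity)
  have hma : m < a := by nlinarith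
  -- `(a - m) (b - m) = c² + m² ≥ c²`, so `!![a - m, -c; -c, b - m]` is positive semidefinite
  nlinarith [sq_nonneg ((a - m) * s - c * t), sq_nonneg (m * t)]

section BlockOperator

variable {X U : Type*} [NormedAddCommGroup X] [InnerProductSpace ℝ X] [CompleteSpace X]
  [NormedAddCommGroup U] [InnerProductSpace ℝ U] [CompleteSpace U] (L : X →L[ℝ] U) (a b : ℝ)

lemma inner_block_adjoint_symm (x : X) (u : U) (x' : X) (u' : U) :
    ⟪a • x - L.adjoint u, x'⟫ + ⟪-(L x) + b • u, u'⟫ =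
      ⟪x, a • x' - L.adjoint u'⟫ + ⟪u, -(L x') + b • u'⟫ := by
  simp only [inner_sub_left, inner_sub_right, inner_add_left, inner_add_right,
    real_inner_smul_left, real_inner_smul_right, inner_neg_left, inner_neg_right,
    ContinuousLinearMap.adjoint_inner_left, ContinuousLinearMap.adjoint_inner_right]
  ring

lemma inner_block_adjoint_self (x : X) (u : U) :
    ⟪x, a • x - L.adjoint u⟫ + ⟪u, -(L x) + b • u⟫ = a * ‖x‖ ^ 2 + b * ‖u‖ ^ 2 - 2 * ⟪L x, u⟫ := by
  simp only [inner_sub_right, inner_add_right, real_inner_smul_right, inner_neg_right,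
    ContinuousLinearMap.adjoint_inner_right, real_inner_self_eq_norm_sq, real_inner_comm u (L x)]
  ring

lemma norm_sq_block_adjoint_le (x : X) (u : U) :
    ‖a • x - L.adjoint u‖ ^ 2 + ‖-(L x) + b • u‖ ^ 2 ≤
      (a ^ 2 + b ^ 2 + 2 * ‖L‖ ^ 2) * (‖x‖ ^ 2 + ‖u‖ ^ 2) := by
  have hadj : ‖L.adjoint u‖ ≤ ‖L‖ * ‖u‖ :=
    (L.adjoint.le_opNorm u).trans_eq (by rw [ContinuousLinearMap.adjoint.norm_map])
  have h₁ : ‖a • x - L.adjoint u‖ ≤ |a| * ‖x‖ + ‖L‖ * ‖u‖ := by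
    grw [norm_sub_le, norm_smul, Real.norm_eq_abs, hadj]
  have h₂ : ‖-(L x) + b • u‖ ≤ ‖L‖ * ‖x‖ + |b| * ‖u‖ := by
    grw [norm_add_le, norm_neg, norm_smul, Real.norm_eq_abs, L.le_opNorm x]
  have := sq_le_sq_add_sq_mul_sq_add_sq_of_le_mul_add_mul (norm_nonneg _) h₁
  have := sq_le_sq_add_sq_mul_sq_add_sq_of_le_mul_add_mul (norm_nonneg _) h₂
  rw [sq_abs] at *
  linarith

lemma exists_pos_mul_le_inner_block_adjoint_self (ha : 0 < a) (hb : 0 < b)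
    (hL : ‖L‖ ^ 2 < a * b) :
    ∃ m : ℝ, 0 < m ∧ ∀ x u,
      m * (‖x‖ ^ 2 + ‖u‖ ^ 2) ≤ ⟪x, a • x - L.adjoint u⟫ + ⟪u, -(L x) + b • u⟫ := by
  refine ⟨(a * b - ‖L‖ ^ 2) / (a + b), by apply div_pos <;> linarith, fun x u => ?_⟩
  have hLxu : ⟪L x, u⟫ ≤ ‖L‖ * ‖x‖ * ‖u‖ :=
    (real_inner_le_norm _ _).trans (by gcongr; exact L.le_opNorm x)
  rw [inner_block_adjoint_self]
  linarith [det_div_trace_mul_sq_add_sq_le ha hb hL.le ‖x‖ ‖u‖]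

end BlockOperator

theorem primal_dual_preconditioner_strongly_positive_general {X U : Type*}
    [NormedAddCommGroup X] [InnerProductSpace ℝ X] [CompleteSpace X]
    [NormedAddCommGroup U] [InnerProductSpace ℝ U] [CompleteSpace U]
    (L : X →L[ℝ] U) (τ σ : ℝ) (hτ : 0 < τ) (hσ : 0 < σ) (hτσ : τ * σ * ‖L‖ ^ 2 < 1)
    (P1 : X → U → X) (P2 : X → U → U)
    (hP1 : ∀ x u, P1 x u = τ⁻¹ • x - ContinuousLinearMap.adjoint L u)
    (hP2 : ∀ x u, P2 x u = -(L x) + σ⁻¹ • u) :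
    (∀ x u x' u', (⟪P1 x u, x'⟫ : ℝ) + ⟪P2 x u, u'⟫ = ⟪x, P1 x' u'⟫ + ⟪u, P2 x' u'⟫) ∧
      (∃ cb : ℝ, ∀ x u, ‖P1 x u‖ ^ 2 + ‖P2 x u‖ ^ 2 ≤ cb * (‖x‖ ^ 2 + ‖u‖ ^ 2)) ∧
      (∃ a : ℝ, 0 < a ∧
        ∀ x u, a * (‖x‖ ^ 2 + ‖u‖ ^ 2) ≤ (⟪x, P1 x u⟫ : ℝ) + ⟪u, P2 x u⟫) := by
  have hL : ‖L‖ ^ 2 < τ⁻¹ * σ⁻¹ := by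
    rw [← mul_inv, ← one_div, lt_div_iff₀ (mul_pos hτ hσ)]
    linarith
  simp only [hP1, hP2]
  exact ⟨inner_block_adjoint_symm L τ⁻¹ σ⁻¹, ⟨_, norm_sq_block_adjoint_le L τ⁻¹ σ⁻¹⟩,
    exists_pos_mul_le_inner_block_adjoint_self L τ⁻¹ σ⁻¹ (inv_pos.2 hτ) (inv_pos.2 hσ) hL⟩

/-- Let `f ∈ Γ₀(X)`, `g ∈ Γ₀(U)` (here real-valued convex lsc), `L : X → U` bounded linear
and `τ, σ > 0` with `τ σ ‖L‖² < 1`. Then the operator `P` on `X × U` defined by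
`P (x, u) = ((1/τ) x - L* u, -L x + (1/σ) u)` is self-adjoint, bounded, and strongly
positive (all expressed componentwise for the natural inner product of `X × U`). -/
theorem primal_dual_preconditioner_strongly_positive {X U : Type*}
    [NormedAddCommGroup X] [InnerProductSpace ℝ X] [CompleteSpace X]
    [NormedAddCommGroup U] [InnerProductSpace ℝ U] [CompleteSpace U]
    (f : X → ℝ) (hfconv : ConvexOn ℝ Set.univ f) (hflsc : LowerSemicontinuous f)
    (g : U → ℝ) (hgconv : ConvexOn ℝ Set.univ g) (hglsc : LowerSemicontinuous g)
    (L : X →L[ℝ] U) (τ σ : ℝ) (hτ : 0 < τ) (hσ : 0 < σ) (hτσ : τ * σ * ‖L‖ ^ 2 < 1)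
    (P1 : X → U → X) (P2 : X → U → U)
    (hP1 : ∀ x u, P1 x u = τ⁻¹ • x - ContinuousLinearMap.adjoint L u)
    (hP2 : ∀ x u, P2 x u = -(L x) + σ⁻¹ • u) :
    (∀ x u x' u', (⟪P1 x u, x'⟫ : ℝ) + ⟪P2 x u, u'⟫ = ⟪x, P1 x' u'⟫ + ⟪u, P2 x' u'⟫) ∧
      (∃ cb : ℝ, ∀ x u, ‖P1 x u‖ ^ 2 + ‖P2 x u‖ ^ 2 ≤ cb * (‖x‖ ^ 2 + ‖u‖ ^ 2)) ∧
      (∃ a : ℝ, 0 < a ∧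
        ∀ x u, a * (‖x‖ ^ 2 + ‖u‖ ^ 2) ≤ (⟪x, P1 x u⟫ : ℝ) + ⟪u, P2 x u⟫) :=
  primal_dual_preconditioner_strongly_positive_general L τ σ hτ hσ hτσ P1 P2 hP1 hP2
end

section
/- In the Condat–Vũ setting, let P be the operator on Z = X × U given by P(x,u) = ((1/τ)x − L*u, −Lx + (1/σ)u) with τ(σ‖L‖² + β/2) < 1, and let C(x,u) = (∇h(x), 0) where ∇h is β-Lipschitz and (1/β)-cocoercive. Then P⁻¹C is χ-cocoercive on Z_P with χ = (1/β)(1/τ − σ‖L‖²), and χ > 1/2. -/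
open RealInnerProductSpace

/-!
Write `c = τ⁻¹ - σ‖L‖²` and `d = h' x - h' x'`. The second row of `P w = (d, 0)` forces
`w₂ = σ L w₁`, so the first row gives `⟪w₁, d⟫ = τ⁻¹‖w₁‖² - σ‖L w₁‖² ≥ c‖w₁‖²`. With
Cauchy–Schwarz this yields `c ⟪w₁, d⟫ ≤ ‖d‖²`, and the `(1/β)`-cocoercivity of `h'` turns
`β⁻¹‖d‖²` into `⟪x - x', d⟫`. The step-size condition is exactly `β/2 < c`.
-/

section InnerProductSpace

variable {E : Type*} [NormedAddCommGroup E] [InnerProductSpace ℝ E]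

/-- This is how strong positivity of `P` becomes cocoercivity of `P⁻¹`. -/
theorem mul_inner_le_norm_sq_of_mul_norm_sq_le_inner {c : ℝ} (hc : 0 ≤ c) {w d : E}
    (hwd : c * ‖w‖ ^ 2 ≤ ⟪w, d⟫) : c * ⟪w, d⟫ ≤ ‖d‖ ^ 2 := by
  have hcs : ⟪w, d⟫ ≤ ‖w‖ * ‖d‖ := real_inner_le_norm w d
  have hcw : c * ‖w‖ * ‖d‖ ≤ ‖d‖ ^ 2 := by
    rcases (norm_nonneg w).eq_or_lt with hw | hw
    · rw [← hw, mul_zero, zero_mul]; positivity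
    · have : c * ‖w‖ ≤ ‖d‖ := le_of_mul_le_mul_right (by nlinarith) hw
      nlinarith [norm_nonneg d]
  calc c * ⟪w, d⟫ ≤ c * (‖w‖ * ‖d‖) := mul_le_mul_of_nonneg_left hcs hc
    _ ≤ ‖d‖ ^ 2 := by rw [← mul_assoc]; exact hcw

end InnerProductSpace

section CondatVu

variable {X U : Type*} [NormedAddCommGroup X] [InnerProductSpace ℝ X] [CompleteSpace X]
  [NormedAddCommGroup U] [InnerProductSpace ℝ U] [CompleteSpace U]

theorem inner_smul_sub_adjoint_smul_apply (L : X →L[ℝ] U) (τ σ : ℝ) (w : X) :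
    ⟪w, τ⁻¹ • w - ContinuousLinearMap.adjoint L (σ • L w)⟫ = τ⁻¹ * ‖w‖ ^ 2 - σ * ‖L w‖ ^ 2 := by
  rw [inner_sub_right, real_inner_smul_right, ContinuousLinearMap.adjoint_inner_right,
    real_inner_smul_right, real_inner_self_eq_norm_sq, real_inner_self_eq_norm_sq]

theorem mul_norm_sq_le_inner_smul_sub_adjoint_smul_apply (L : X →L[ℝ] U) (τ : ℝ) {σ : ℝ}
    (hσ : 0 ≤ σ) (w : X) :
    (τ⁻¹ - σ * ‖L‖ ^ 2) * ‖w‖ ^ 2 ≤ ⟪w, τ⁻¹ • w - ContinuousLinearMap.adjoint L (σ • L w)⟫ := by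
  have hLw : ‖L w‖ ^ 2 ≤ ‖L‖ ^ 2 * ‖w‖ ^ 2 := by
    rw [← mul_pow]; gcongr; exact L.le_opNorm w
  rw [inner_smul_sub_adjoint_smul_apply]
  nlinarith [mul_le_mul_of_nonneg_left hLw hσ]

end CondatVu

/-- In the conclusion, `(w1, w2)` is `P⁻¹ (C z - C z')`, given by its defining equations; since
`C z - C z'` has zero `U`-component, both sides of the cocoercivity inequality in `Z_P` reduce to
inner products in `X`. -/
theorem condat_vu_cocoercivity_general {X U : Type*}
    [NormedAddCommGroup X] [InnerProductSpace ℝ X] [CompleteSpace X]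
    [NormedAddCommGroup U] [InnerProductSpace ℝ U] [CompleteSpace U]
    (L : X →L[ℝ] U) (τ σ β : ℝ) (hτ : 0 < τ) (hσ : 0 < σ) (hβ : 0 < β)
    (hcond : τ * (σ * ‖L‖ ^ 2 + β / 2) < 1)
    (h' : X → X)
    (hcoco : ∀ x y : X, β⁻¹ * ‖h' x - h' y‖ ^ 2 ≤ ⟪x - y, h' x - h' y⟫) :
    (1 / 2 : ℝ) < β⁻¹ * (τ⁻¹ - σ * ‖L‖ ^ 2) ∧
      ∀ (x x' : X) (u u' : U) (w1 : X) (w2 : U),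
        τ⁻¹ • w1 - ContinuousLinearMap.adjoint L w2 = h' x - h' x' →
        -(L w1) + σ⁻¹ • w2 = 0 →
        (β⁻¹ * (τ⁻¹ - σ * ‖L‖ ^ 2)) * ⟪w1, h' x - h' x'⟫ ≤ ⟪x - x', h' x - h' x'⟫ := by
  have hc : β / 2 < τ⁻¹ - σ * ‖L‖ ^ 2 := by
    rw [lt_sub_iff_add_lt', ← one_div, lt_div_iff₀ hτ]; linarith
  refine ⟨by rw [inv_mul_eq_div, lt_div_iff₀ hβ]; linarith, ?_⟩
  intro x x' _ _ w1 w2 hrow₁ hrow₂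
  obtain rfl : w2 = σ • L w1 := by
    rw [neg_add_eq_zero] at hrow₂
    rw [hrow₂, smul_smul, mul_inv_cancel₀ hσ.ne', one_smul]
  have hstrong := (mul_norm_sq_le_inner_smul_sub_adjoint_smul_apply L τ hσ.le w1).trans_eq
    (congrArg _ hrow₁)
  calc β⁻¹ * (τ⁻¹ - σ * ‖L‖ ^ 2) * ⟪w1, h' x - h' x'⟫
      = β⁻¹ * ((τ⁻¹ - σ * ‖L‖ ^ 2) * ⟪w1, h' x - h' x'⟫) := mul_assoc _ _ _
    _ ≤ β⁻¹ * ‖h' x - h' x'‖ ^ 2 := by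
      gcongr; exact mul_inner_le_norm_sq_of_mul_norm_sq_le_inner (by linarith) hstrong
    _ ≤ ⟪x - x', h' x - h' x'⟫ := hcoco x x'

/-- **Cocoercivity in the Condat–Vũ metric.** Let `Z = X × U`, `P (x, u) =
((1/τ) x - L* u, -L x + (1/σ) u)` with `τ (σ ‖L‖² + β/2) < 1`, and `C (x, u) = (h' x, 0)`
where `h'` is the `β`-Lipschitz and `(1/β)`-cocoercive gradient of a convex function `h`.
Then `P⁻¹ C` is `χ`-cocoercive on `Z_P` with `χ = (1/β)(1/τ - σ ‖L‖²)`, and `χ > 1/2`.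
Cocoercivity in `Z_P` is expressed as: for every `z = (x, u)`, `z' = (x', u')` and every
`w = (w1, w2)` with `P w = C z - C z'`, one has
`χ ⟨w, C z - C z'⟩ ≤ ⟨z - z', C z - C z'⟩`, i.e.
`χ ⟨w1, h' x - h' x'⟩ ≤ ⟨x - x', h' x - h' x'⟩`. -/
theorem condat_vu_cocoercivity {X U : Type*}
    [NormedAddCommGroup X] [InnerProductSpace ℝ X] [CompleteSpace X]
    [NormedAddCommGroup U] [InnerProductSpace ℝ U] [CompleteSpace U]
    (L : X →L[ℝ] U) (τ σ β : ℝ) (hτ : 0 < τ) (hσ : 0 < σ) (hβ : 0 < β)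
    (hcond : τ * (σ * ‖L‖ ^ 2 + β / 2) < 1)
    (h : X → ℝ) (hconv : ConvexOn ℝ Set.univ h)
    (h' : X → X) (hgrad : ∀ x : X, HasGradientAt h (h' x) x)
    (hlip : ∀ x y : X, ‖h' x - h' y‖ ≤ β * ‖x - y‖)
    (hcoco : ∀ x y : X, β⁻¹ * ‖h' x - h' y‖ ^ 2 ≤ ⟪x - y, h' x - h' y⟫) :
    (1 / 2 : ℝ) < β⁻¹ * (τ⁻¹ - σ * ‖L‖ ^ 2) ∧
      ∀ (x x' : X) (u u' : U) (w1 : X) (w2 : U),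
        τ⁻¹ • w1 - ContinuousLinearMap.adjoint L w2 = h' x - h' x' →
        -(L w1) + σ⁻¹ • w2 = 0 →
        (β⁻¹ * (τ⁻¹ - σ * ‖L‖ ^ 2)) * ⟪w1, h' x - h' x'⟫ ≤ ⟪x - x', h' x - h' x'⟫ :=
  condat_vu_cocoercivity_general L τ σ β hτ hσ hβ hcond h' hcoco
end

section
/- Let 𝐗 = X^M with weighted inner product ⟨𝐱, 𝐱'⟩ = Σ_m ω_m⟨x_m, x'_m⟩ where ω_m > 0 and Σ_m ω_m = 1, f ∈ Γ₀(X), and define 𝐟(𝐱) = f(x_1) + ι_=(𝐱) where ι_= is the indicator of the diagonal {𝐱 : x_1 = ⋯ = x_M}. Then for any γ > 0, prox_{γ𝐟}(𝐱) = (x', …, x') with x' = prox_{γf}(Σ_m ω_m x_m). -/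
open RealInnerProductSpace Finset Classical

/-! On the diagonal the weighted distance to `x` splits, as in Huygens' parallel-axis theorem, into
the spread of `x` around its weighted mean `x̄ = Σ ω_m x_m` plus `‖x̄ - y‖²`. So the consensus
objective at `(y, …, y)` is the prox objective of `γ f` at `x̄` shifted by a constant, and `x'`
minimizes both; off the diagonal the objective is `⊤`. -/

theorem sum_mul_norm_sub_sq_eq_add_norm_wmean_sub_sq {ι E : Type*} [NormedAddCommGroup E]
    [InnerProductSpace ℝ E] (s : Finset ι) (w : ι → ℝ) (hw : ∑ i ∈ s, w i = 1)
    (x : ι → E) (y : E) :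
    ∑ i ∈ s, w i * ‖x i - y‖ ^ 2
      = ∑ i ∈ s, w i * ‖x i - ∑ j ∈ s, w j • x j‖ ^ 2 + ‖(∑ j ∈ s, w j • x j) - y‖ ^ 2 := by
  set c := ∑ j ∈ s, w j • x j
  have centered : ∑ i ∈ s, w i • (x i - c) = 0 := by
    simp only [smul_sub, sum_sub_distrib, ← sum_smul, hw, one_smul, c, sub_self]
  have cross : ∑ i ∈ s, w i * ⟪x i - c, c - y⟫ = 0 := by
    simp only [← real_inner_smul_left, ← sum_inner, centered, inner_zero_left]
  calc ∑ i ∈ s, w i * ‖x i - y‖ ^ 2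
      = ∑ i ∈ s, (w i * ‖x i - c‖ ^ 2 + 2 * (w i * ⟪x i - c, c - y⟫) + w i * ‖c - y‖ ^ 2) := by
        refine sum_congr rfl fun i _ => ?_
        rw [← sub_add_sub_cancel (x i) c y, norm_add_sq_real]
        ring_nf
    _ = ∑ i ∈ s, w i * ‖x i - c‖ ^ 2 + ‖c - y‖ ^ 2 := by
        rw [sum_add_distrib, sum_add_distrib, ← mul_sum, cross, ← sum_mul, hw]
        ring

theorem prox_consensus_general {X : Type*} [NormedAddCommGroup X] [InnerProductSpace ℝ X]
    {M : ℕ} [NeZero M]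
    (f : X → ℝ)
    (ω : Fin M → ℝ) (hωsum : ∑ m, ω m = 1)
    (γ : ℝ) (x : Fin M → X) (x' : X)
    (hx' : ∀ y : X,
      γ * f x' + (1 / 2) * ‖(∑ m, ω m • x m) - x'‖ ^ 2
        ≤ γ * f y + (1 / 2) * ‖(∑ m, ω m • x m) - y‖ ^ 2) :
    ∀ q : Fin M → X,
      ((γ * f x' + (1 / 2) * ∑ m, ω m * ‖x m - x'‖ ^ 2 : ℝ) : EReal)
        ≤ if ∀ m, q m = q 0 then
            ((γ * f (q 0) + (1 / 2) * ∑ m, ω m * ‖x m - q m‖ ^ 2 : ℝ) : EReal)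
          else ⊤ := by
  intro q
  split_ifs with hdiag
  · have hq : ∑ m, ω m * ‖x m - q m‖ ^ 2 = ∑ m, ω m * ‖x m - q 0‖ ^ 2 :=
      sum_congr rfl fun m _ => by rw [hdiag m]
    have split := sum_mul_norm_sub_sq_eq_add_norm_wmean_sub_sq _ _ hωsum x
    rw [EReal.coe_le_coe_iff, hq, split x', split (q 0)]
    linarith [hx' (q 0)]
  · exact le_top

/-- **Consensus prox.** Let `𝐗 = X^M` with weighted inner product
`⟨𝐱, 𝐱'⟩ = Σ_m ω m ⟨x_m, x'_m⟩` where `ω m > 0` and `Σ_m ω m = 1`, let `f ∈ Γ₀(X)`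
(real-valued convex lsc), and define `𝐟(𝐱) = f(x_1) + ι_=(𝐱)` where `ι_=` is the
indicator of the diagonal. Then for any `γ > 0`,
`prox_{γ 𝐟}(𝐱) = (x', …, x')` with `x' = prox_{γ f}(Σ_m ω m x_m)`: the constant tuple
`(x', …, x')` minimizes `q ↦ γ 𝐟(q) + ½ ‖𝐱 - q‖²_ω` over all tuples `q` (the objective,
with values in `EReal`, being `+∞` off the diagonal). -/
theorem prox_consensus {X : Type*} [NormedAddCommGroup X] [InnerProductSpace ℝ X]
    [CompleteSpace X] {M : ℕ} [NeZero M]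
    (f : X → ℝ) (hfconv : ConvexOn ℝ Set.univ f) (hflsc : LowerSemicontinuous f)
    (ω : Fin M → ℝ) (hω : ∀ m, 0 < ω m) (hωsum : ∑ m, ω m = 1)
    (γ : ℝ) (hγ : 0 < γ) (x : Fin M → X) (x' : X)
    (hx' : ∀ y : X,
      γ * f x' + (1 / 2) * ‖(∑ m, ω m • x m) - x'‖ ^ 2
        ≤ γ * f y + (1 / 2) * ‖(∑ m, ω m • x m) - y‖ ^ 2) :
    ∀ q : Fin M → X,
      ((γ * f x' + (1 / 2) * ∑ m, ω m * ‖x m - x'‖ ^ 2 : ℝ) : EReal)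
        ≤ if ∀ m, q m = q 0 then
            ((γ * f (q 0) + (1 / 2) * ∑ m, ω m * ‖x m - q m‖ ^ 2 : ℝ) : EReal)
          else ⊤ :=
  prox_consensus_general f ω hωsum γ x x' hx'
end
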